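/- arXiv:2405.15455 — 4 statements merged into one kernel-verified Lean document; each statement's English description precedes it below -/
import Mathlib

section
/- Let φ : Σ → Σ' be a continuous map of topological spaces, E a POVM on Σ with values in B(H_R), and f : Σ' → B(H_S) ultraweakly continuous and bounded. Then E∘φ⁻¹ (defined by (E∘φ⁻¹)(X) := E(φ⁻¹(X))) is a POVM on Σ', f∘φ is ultraweakly continuous and bounded, and the operator-valued integrals satisfy the change-of-variables formula ∫_Σ (f∘φ) ⊗ dE = ∫_{Σ'} f ⊗ d(E∘φ⁻¹). -/
open MeasureTheory ContinuousLinearMap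
open scoped ENNReal

noncomputable section

namespace QRF

variable (H : Type*) [NormedAddCommGroup H] [InnerProductSpace ℂ H] [CompleteSpace H]

/-- The index set of an arbitrarily chosen Hilbert basis of `H`. -/
def hbIdx : Set H := (exists_hilbertBasis ℂ H).choose

/-- An arbitrarily chosen Hilbert basis of `H`. -/
def hb : HilbertBasis (hbIdx H) ℂ H := (exists_hilbertBasis ℂ H).choose_spec.choose

variable {H}

/-- The trace of an operator, computed along the chosen Hilbert basis.  (It is
basis-independent, and finite, on trace-class operators.) -/
def trace (T : H →L[ℂ] H) : ℂ := ∑' i : hbIdx H, (inner ℂ (hb H i) (T (hb H i)) : ℂ)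

/-- A positive trace-class operator: positive with summable diagonal (for positive
operators this is basis-independent). -/
def IsPositiveTraceClass (T : H →L[ℂ] H) : Prop :=
  T.IsPositive ∧ Summable fun i : hbIdx H => ((inner ℂ (hb H i) (T (hb H i)) : ℂ)).re

/-- A state: a positive trace-class operator of trace one. -/
def IsState (T : H →L[ℂ] H) : Prop := IsPositiveTraceClass T ∧ trace T = 1

/-- A trace-class operator: a linear combination of four positive trace-class operators. -/
def IsTraceClass (T : H →L[ℂ] H) : Prop :=
  ∃ A B C D : H →L[ℂ] H, IsPositiveTraceClass A ∧ IsPositiveTraceClass B ∧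
    IsPositiveTraceClass C ∧ IsPositiveTraceClass D ∧ T = A - B + Complex.I • (C - D)

variable {Ω Ω' : Type*} [MeasurableSpace Ω] [MeasurableSpace Ω']

/-- A POVM on a measurable space `Ω` with values in `B(H)`: effects, normalized, and each
state induces a countably additive Born probability measure. -/
def IsPOVM (E : Set Ω → (H →L[ℂ] H)) : Prop :=
  (∀ X : Set Ω, MeasurableSet X → (E X).IsPositive ∧ (1 - E X).IsPositive) ∧
  E Set.univ = 1 ∧
  ∀ ω : H →L[ℂ] H, IsState ω → ∃ μ : Measure Ω, IsProbabilityMeasure μ ∧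
    ∀ X : Set Ω, MeasurableSet X → (μ X).toReal = (trace (ω ∘L E X)).re

/-- A POVM "on a subset `S`" of `Ω`: normalized on `S` and concentrated there. -/
def IsPOVMOn (S : Set Ω) (E : Set Ω → (H →L[ℂ] H)) : Prop :=
  (∀ X : Set Ω, MeasurableSet X → (E X).IsPositive ∧ (1 - E X).IsPositive) ∧
  E S = 1 ∧ (∀ X : Set Ω, MeasurableSet X → E X = E (X ∩ S)) ∧
  ∀ ω : H →L[ℂ] H, IsState ω → ∃ μ : Measure Ω, IsProbabilityMeasure μ ∧
    ∀ X : Set Ω, MeasurableSet X → (μ X).toReal = (trace (ω ∘L E X)).re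

open Classical in
/-- The Born probability measure `μ^E_ω : X ↦ tr(ω E(X))` of a state `ω` for a POVM `E`. -/
def bornMeasure (E : Set Ω → (H →L[ℂ] H)) (ω : H →L[ℂ] H) : Measure Ω :=
  if h : ∃ μ : Measure Ω, IsProbabilityMeasure μ ∧
      ∀ X : Set Ω, MeasurableSet X → (μ X).toReal = (trace (ω ∘L E X)).re
  then h.choose else 0

variable {HS HR HR' HT HT' : Type*}
  [NormedAddCommGroup HS] [InnerProductSpace ℂ HS] [CompleteSpace HS]
  [NormedAddCommGroup HR] [InnerProductSpace ℂ HR] [CompleteSpace HR]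
  [NormedAddCommGroup HR'] [InnerProductSpace ℂ HR'] [CompleteSpace HR']
  [NormedAddCommGroup HT] [InnerProductSpace ℂ HT] [CompleteSpace HT]
  [NormedAddCommGroup HT'] [InnerProductSpace ℂ HT'] [CompleteSpace HT']

/-- A realization of the Hilbert tensor product of `HS` and `HR` as `HT`: a bilinear map
whose image has dense span and which multiplies inner products. -/
structure HilbertTensor (HS HR HT : Type*)
    [NormedAddCommGroup HS] [InnerProductSpace ℂ HS]
    [NormedAddCommGroup HR] [InnerProductSpace ℂ HR]
    [NormedAddCommGroup HT] [InnerProductSpace ℂ HT] where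
  tmul : HS → HR → HT
  add_left : ∀ a a' b, tmul (a + a') b = tmul a b + tmul a' b
  add_right : ∀ a b b', tmul a (b + b') = tmul a b + tmul a b'
  smul_left : ∀ (c : ℂ) a b, tmul (c • a) b = c • tmul a b
  smul_right : ∀ (c : ℂ) a b, tmul a (c • b) = c • tmul a b
  inner_tmul : ∀ a b c d,
    (inner ℂ (tmul a b) (tmul c d) : ℂ) = (inner ℂ a c : ℂ) * (inner ℂ b d : ℂ)
  dense_span : Dense
    ((Submodule.span ℂ (Set.range fun p : HS × HR => tmul p.1 p.2) : Submodule ℂ HT) : Set HT)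

/-- `C = A ⊗ B` with respect to a tensor-product realization: `C` acts factor-wise on
elementary tensors (this determines `C` uniquely, by density and boundedness). -/
def HilbertTensor.IsTensorOp
    {HS HR HT : Type*}
    [NormedAddCommGroup HS] [InnerProductSpace ℂ HS]
    [NormedAddCommGroup HR] [InnerProductSpace ℂ HR]
    [NormedAddCommGroup HT] [InnerProductSpace ℂ HT]
    (tm : HilbertTensor HS HR HT)
    (A : HS →L[ℂ] HS) (B : HR →L[ℂ] HR) (C : HT →L[ℂ] HT) : Prop :=
  ∀ a b, C (tm.tmul a b) = tm.tmul (A a) (B b)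

/-- `A = ∫_Ω f ⊗ dE`: the defining property of the operator-valued integral, via expectation
values on product states. -/
def IsOVIntegral (tm : HilbertTensor HS HR HT) (f : Ω → HS →L[ℂ] HS)
    (E : Set Ω → (HR →L[ℂ] HR)) (A : HT →L[ℂ] HT) : Prop :=
  ∀ ρ ω ρω, IsState ρ → IsState ω → tm.IsTensorOp ρ ω ρω →
    trace (ρω ∘L A) = ∫ x, trace (ρ ∘L f x) ∂(bornMeasure E ω)

/-- `A = ∫_S f ⊗ dE`: operator-valued integral over a subset `S` of `Ω`. -/
def IsOVIntegralOn (S : Set Ω) (tm : HilbertTensor HS HR HT) (f : Ω → HS →L[ℂ] HS)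
    (E : Set Ω → (HR →L[ℂ] HR)) (A : HT →L[ℂ] HT) : Prop :=
  ∀ ρ ω ρω, IsState ρ → IsState ω → tm.IsTensorOp ρ ω ρω →
    trace (ρω ∘L A) = ∫ x in S, trace (ρ ∘L f x) ∂(bornMeasure E ω)

/-- An ultraweakly continuous and bounded operator-valued function. -/
def UWContinuousBounded [TopologicalSpace Ω] (f : Ω → HS →L[ℂ] HS) : Prop :=
  (∀ ρ : HS →L[ℂ] HS, IsTraceClass ρ → Continuous fun x => trace (ρ ∘L f x)) ∧
  ∃ C : ℝ, ∀ x, ‖f x‖ ≤ C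

/-- Ultraweak continuity/boundedness on a subset. -/
def UWContinuousBoundedOn [TopologicalSpace Ω] (f : Ω → HS →L[ℂ] HS) (S : Set Ω) : Prop :=
  (∀ ρ : HS →L[ℂ] HS, IsTraceClass ρ → ContinuousOn (fun x => trace (ρ ∘L f x)) S) ∧
  ∃ C : ℝ, ∀ x ∈ S, ‖f x‖ ≤ C

variable {G : Type*} [Group G] [TopologicalSpace G]

/-- A strongly continuous unitary representation of a topological group. -/
def IsUnitaryRep (U : G → H →L[ℂ] H) : Prop :=
  U 1 = 1 ∧ (∀ g h : G, U (g * h) = U g ∘L U h) ∧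
  (∀ g : G, adjoint (U g) = U g⁻¹) ∧ ∀ x : H, Continuous fun g : G => U g x

/-- The right action `A.g := U(g)* A U(g)` of `G` on operators. -/
def opAct (U : G → H →L[ℂ] H) (g : G) (A : H →L[ℂ] H) : H →L[ℂ] H :=
  adjoint (U g) ∘L A ∘L U g

/-- The left action `g.ρ := U(g) ρ U(g)*` of `G` on states. -/
def stateAct (U : G → H →L[ℂ] H) (g : G) (ρ : H →L[ℂ] H) : H →L[ℂ] H :=
  U g ∘L ρ ∘L adjoint (U g)

/-- Right covariance of a POVM on a group: `E(X·g) = U(g)* E(X) U(g)`. -/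
def RightCovariant [MeasurableSpace G] (U : G → H →L[ℂ] H) (E : Set G → (H →L[ℂ] H)) : Prop :=
  ∀ X : Set G, MeasurableSet X → ∀ g : G,
    E ((fun x => x * g) '' X) = adjoint (U g) ∘L E X ∘L U g

/-- A channel: a unital, completely positive, normal (ultraweakly continuous, i.e. admitting
a predual on trace-class operators) linear map between operator algebras. -/
structure IsChannel (ψ : (HR →L[ℂ] HR) → (HR' →L[ℂ] HR')) : Prop where
  linear : IsLinearMap ℂ ψ
  unital : ψ 1 = 1
  completelyPositive : ∀ (n : ℕ) (a : Fin n → HR →L[ℂ] HR) (x : Fin n → HR'),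
    0 ≤ (∑ i, ∑ j, (inner ℂ (x i) ((ψ ((adjoint (a i)) ∘L (a j))) (x j)) : ℂ)).re ∧
    (∑ i, ∑ j, (inner ℂ (x i) ((ψ ((adjoint (a i)) ∘L (a j))) (x j)) : ℂ)).im = 0
  normal : ∀ ω : HR' →L[ℂ] HR', IsTraceClass ω → ∃ ω' : HR →L[ℂ] HR, IsTraceClass ω' ∧
    ∀ A : HR →L[ℂ] HR, trace (ω ∘L ψ A) = trace (ω' ∘L A)

/-- The trace norm, via duality: `‖T‖₁ = sup {|tr(T A)| : ‖A‖ ≤ 1}`. -/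
def traceNorm (T : H →L[ℂ] H) : ℝ :=
  ⨆ A : {A : H →L[ℂ] H // ‖A‖ ≤ 1}, ‖trace (T ∘L A.1)‖

end QRF



namespace QRF

lemma isState_isTraceClass {H : Type*} [NormedAddCommGroup H] [InnerProductSpace ℂ H]
    [CompleteSpace H] {ρ : H →L[ℂ] H} (hρ : IsState ρ) : IsTraceClass ρ := by
  have h0 : IsPositiveTraceClass (0 : H →L[ℂ] H) := by
    refine ⟨ContinuousLinearMap.isPositive_zero, ?_⟩
    simpa using (summable_zero : Summable fun _ : hbIdx H => (0 : ℝ))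
  exact ⟨ρ, 0, 0, 0, hρ.1, h0, h0, h0, by simp⟩

lemma bornMeasure_spec {H Ω : Type*} [NormedAddCommGroup H] [InnerProductSpace ℂ H]
    [CompleteSpace H] [MeasurableSpace Ω] {E : Set Ω → (H →L[ℂ] H)} {ω : H →L[ℂ] H}
    (h : ∃ μ : Measure Ω, IsProbabilityMeasure μ ∧
      ∀ X : Set Ω, MeasurableSet X → (μ X).toReal = (trace (ω ∘L E X)).re) :
    IsProbabilityMeasure (bornMeasure E ω) ∧
      ∀ X : Set Ω, MeasurableSet X → ((bornMeasure E ω) X).toReal = (trace (ω ∘L E X)).re := by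
  rw [bornMeasure, dif_pos h]
  exact h.choose_spec

end QRF

open QRF

/-- Change of variables for operator-valued integrals: `E∘φ⁻¹` is a POVM, `f∘φ` is
ultraweakly continuous and bounded, and `∫_Σ (f∘φ) ⊗ dE = ∫_Σ' f ⊗ d(E∘φ⁻¹)`. -/
theorem statement1 {Ω Ω' HS HR HT : Type*}
    [TopologicalSpace Ω] [MeasurableSpace Ω] [BorelSpace Ω]
    [TopologicalSpace Ω'] [MeasurableSpace Ω'] [BorelSpace Ω']
    [NormedAddCommGroup HS] [InnerProductSpace ℂ HS] [CompleteSpace HS]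
    [NormedAddCommGroup HR] [InnerProductSpace ℂ HR] [CompleteSpace HR]
    [NormedAddCommGroup HT] [InnerProductSpace ℂ HT] [CompleteSpace HT]
    (φ : Ω → Ω') (hφ : Continuous φ)
    (E : Set Ω → (HR →L[ℂ] HR)) (hE : IsPOVM E)
    (f : Ω' → HS →L[ℂ] HS) (hf : UWContinuousBounded f)
    (tm : HilbertTensor HS HR HT) :
    IsPOVM (fun X : Set Ω' => E (φ ⁻¹' X)) ∧
    UWContinuousBounded (f ∘ φ) ∧
    ∀ A : HT →L[ℂ] HT,
      IsOVIntegral tm (f ∘ φ) E A ↔ IsOVIntegral tm f (fun X : Set Ω' => E (φ ⁻¹' X)) A := by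
  obtain ⟨heff, huniv, hborn⟩ := hE
  have hφm : Measurable φ := hφ.measurable
  -- The pushforward POVM
  have hE' : IsPOVM (fun X : Set Ω' => E (φ ⁻¹' X)) := by
    refine ⟨fun X hX => heff _ (hφm hX), by simpa using huniv, fun ω hω => ?_⟩
    obtain ⟨μ, hμ, hμX⟩ := hborn ω hω
    exact ⟨μ.map φ, Measure.isProbabilityMeasure_map (μ := μ) hφm.aemeasurable, fun X hX => by
      rw [Measure.map_apply hφm hX]; exact hμX _ (hφm hX)⟩
  refine ⟨hE', ⟨fun ρ hρ => (hf.1 ρ hρ).comp hφ, hf.2.imp fun C hC x => hC (φ x)⟩, fun A => ?_⟩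
  -- Key: the integrals agree for every pair of states
  have key : ∀ ρ ω : _, IsState ρ → IsState ω →
      (∫ x, trace (ρ ∘L f (φ x)) ∂(bornMeasure E ω)) =
      ∫ y, trace (ρ ∘L f y) ∂(bornMeasure (fun X : Set Ω' => E (φ ⁻¹' X)) ω) := by
    intro ρ ω hρ hω
    obtain ⟨hp, hXE⟩ := bornMeasure_spec (hborn ω hω)
    obtain ⟨hp', hXE'⟩ := bornMeasure_spec (hE'.2.2 ω hω)
    have hmap : bornMeasure (fun X : Set Ω' => E (φ ⁻¹' X)) ω = (bornMeasure E ω).map φ := by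
      have : IsProbabilityMeasure ((bornMeasure E ω).map φ) := Measure.isProbabilityMeasure_map hφm.aemeasurable
      refine Measure.ext fun X hX => ?_
      have h1 := hXE' X hX
      have h2 : (((bornMeasure E ω).map φ) X).toReal = (trace (ω ∘L E (φ ⁻¹' X))).re := by
        rw [Measure.map_apply hφm hX]; exact hXE _ (hφm hX)
      exact (ENNReal.toReal_eq_toReal_iff' (measure_ne_top _ _) (measure_ne_top _ _)).mp
        (h1.trans h2.symm)
    have hcont : Continuous fun y => trace (ρ ∘L f y) := hf.1 ρ (isState_isTraceClass hρ)
    rw [hmap, integral_map hφm.aemeasurable hcont.aestronglyMeasurable]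
  constructor
  · intro hA ρ ω ρω hρ hω htm
    rw [hA ρ ω ρω hρ hω htm]
    exact key ρ ω hρ hω
  · intro hA ρ ω ρω hρ hω htm
    rw [hA ρ ω ρω hρ hω htm]
    exact (key ρ ω hρ hω).symm
end
end

section
/- Let E be a POVM on a topological space Σ with values in B(H_R), let ψ : B(H_R) → B(H_{R'}) be a channel (unital, completely positive, ultraweakly continuous linear map), and let f : Σ → B(H_S) be ultraweakly continuous and bounded. Then ψ∘E is a POVM on Σ with values in B(H_{R'}), and ∫_Σ f ⊗ d(ψ∘E) = (1_{B(H_S)} ⊗ ψ)(∫_Σ f ⊗ dE), where 1_{B(H_S)} ⊗ ψ denotes the (normal) extension of the map A ⊗ B ↦ A ⊗ ψ(B) to B(H_S ⊗ H_R). -/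
open MeasureTheory ContinuousLinearMap
open scoped ENNReal

noncomputable section

namespace QRF

variable (H : Type*) [NormedAddCommGroup H] [InnerProductSpace ℂ H] [CompleteSpace H]

variable {H}

variable {Ω Ω' : Type*} [MeasurableSpace Ω] [MeasurableSpace Ω']

variable {HS HR HR' HT HT' : Type*}
  [NormedAddCommGroup HS] [InnerProductSpace ℂ HS] [CompleteSpace HS]
  [NormedAddCommGroup HR] [InnerProductSpace ℂ HR] [CompleteSpace HR]
  [NormedAddCommGroup HR'] [InnerProductSpace ℂ HR'] [CompleteSpace HR']
  [NormedAddCommGroup HT] [InnerProductSpace ℂ HT] [CompleteSpace HT]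
  [NormedAddCommGroup HT'] [InnerProductSpace ℂ HT'] [CompleteSpace HT']

variable {G : Type*} [Group G] [TopologicalSpace G]

-- helper lemmas start here

lemma symm_of_sa {S : H →L[ℂ] H} (h : IsSelfAdjoint S) (x y : H) :
    (inner ℂ (S x) y : ℂ) = inner ℂ x (S y) :=
  (ContinuousLinearMap.isSelfAdjoint_iff_isSymmetric.mp h) x y

lemma isPositive_of_inner {T : H →L[ℂ] H}
    (h : ∀ x : H, ((inner ℂ x (T x) : ℂ)).im = 0 ∧ 0 ≤ ((inner ℂ x (T x) : ℂ)).re) :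
    T.IsPositive := by
  rw [ContinuousLinearMap.isPositive_iff_complex]
  intro x
  have h1 := h x
  have hconj : (inner ℂ (T x) x : ℂ) = (starRingEnd ℂ) (inner ℂ x (T x) : ℂ) :=
    (inner_conj_symm _ _).symm
  have him : ((inner ℂ (T x) x : ℂ)).im = 0 := by
    rw [hconj, Complex.conj_im, h1.1, neg_zero]
  have hre : ((inner ℂ (T x) x : ℂ)).re = ((inner ℂ x (T x) : ℂ)).re := by
    rw [hconj, Complex.conj_re]
  refine ⟨?_, ?_⟩
  · rw [RCLike.re_to_complex]
    exact Complex.ext (by simp) (by rw [Complex.ofReal_im]; exact him.symm)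
  · rw [RCLike.re_to_complex, hre]
    exact h1.2

lemma inner_real_of_pos {P : H →L[ℂ] H} (hP : P.IsPositive) (v : H) :
    ((inner ℂ v (P v) : ℂ)).im = 0 ∧ 0 ≤ ((inner ℂ v (P v) : ℂ)).re := by
  have hc := (ContinuousLinearMap.isPositive_iff_complex P).mp hP v
  have hconj : (inner ℂ v (P v) : ℂ) = (starRingEnd ℂ) (inner ℂ (P v) v : ℂ) :=
    (inner_conj_symm _ _).symm
  rw [hconj, ← hc.1]
  constructor
  · simp
  · exact hc.2

lemma parseval_sq (v : H) :
    Summable (fun i : hbIdx H => ‖(inner ℂ v (hb H i) : ℂ)‖ ^ 2) ∧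
    ∑' i : hbIdx H, ‖(inner ℂ v (hb H i) : ℂ)‖ ^ 2 = ‖v‖ ^ 2 := by
  have h := (hb H).hasSum_inner_mul_inner v v
  have heq : (fun i : hbIdx H => (inner ℂ v (hb H i) : ℂ) * inner ℂ (hb H i) v)
      = fun i : hbIdx H => ((‖(inner ℂ v (hb H i) : ℂ)‖ ^ 2 : ℝ) : ℂ) := by
    funext i
    rw [← inner_conj_symm v (hb H i), RCLike.conj_mul]
    rw [RCLike.norm_conj]
    norm_cast
  rw [heq] at h
  have hs : Summable (fun i : hbIdx H => ‖(inner ℂ v (hb H i) : ℂ)‖ ^ 2) := by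
    rw [← Complex.summable_ofReal]
    exact h.summable
  refine ⟨hs, ?_⟩
  have ht : ((∑' i : hbIdx H, ‖(inner ℂ v (hb H i) : ℂ)‖ ^ 2 : ℝ) : ℂ) = inner ℂ v v := by
    rw [Complex.ofReal_tsum]
    exact h.tsum_eq
  have hvv : (inner ℂ v v : ℂ) = (‖v‖ : ℂ) ^ 2 := inner_self_eq_norm_sq_to_K v
  rw [hvv] at ht
  exact_mod_cast ht


/-- The key lemma: the trace of a state against a positive operator is a nonnegative real. -/
lemma trace_comp_pos {ω B : H →L[ℂ] H} (hω : IsState ω) (hB : B.IsPositive) :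
    ∃ r : ℝ, 0 ≤ r ∧ trace (ω ∘L B) = (r : ℂ) := by
  classical
  have hωpos : (0 : H →L[ℂ] H) ≤ ω := (ContinuousLinearMap.nonneg_iff_isPositive ω).mpr hω.1.1
  set S : H →L[ℂ] H := CFC.sqrt ω with hSdef
  have hSpos : S.IsPositive := (ContinuousLinearMap.nonneg_iff_isPositive S).mp (CFC.sqrt_nonneg ω)
  have hSS : S ∘L S = ω := CFC.sqrt_mul_sqrt_self ω hωpos
  have hsymm : ∀ x y : H, (inner ℂ (S x) y : ℂ) = inner ℂ x (S y) :=
    symm_of_sa hSpos.isSelfAdjoint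
  have hBsymm : ∀ x y : H, (inner ℂ (B x) y : ℂ) = inner ℂ x (B y) :=
    symm_of_sa hB.isSelfAdjoint
  -- Hilbert–Schmidt summability of S
  have hdiag : ∀ i : hbIdx H, ‖S (hb H i)‖ ^ 2 = ((inner ℂ (hb H i) (ω (hb H i)) : ℂ)).re := by
    intro i
    have h1 : (inner ℂ (S (hb H i)) (S (hb H i)) : ℂ) = inner ℂ (hb H i) (ω (hb H i)) := by
      rw [hsymm, ← hSS]; rfl
    have h2 : ((inner ℂ (S (hb H i)) (S (hb H i)) : ℂ)).re = ‖S (hb H i)‖ ^ 2 := by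
      rw [inner_self_eq_norm_sq_to_K (𝕜 := ℂ) (S (hb H i))]
      norm_cast
    rw [← h2, h1]
  have hHS : Summable fun i : hbIdx H => ‖S (hb H i)‖ ^ 2 := by
    refine hω.1.2.congr fun i => (hdiag i).symm
  -- the double-indexed family
  set F : hbIdx H × hbIdx H → ℂ :=
    fun p => (inner ℂ (S (hb H p.1)) (hb H p.2) : ℂ) * (inner ℂ (S (hb H p.2)) (B (hb H p.1)) : ℂ)
    with hF
  have hA2 : Summable fun p : hbIdx H × hbIdx H => ‖(inner ℂ (S (hb H p.1)) (hb H p.2) : ℂ)‖ ^ 2 := by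
    rw [summable_prod_of_nonneg (fun p => by positivity)]
    refine ⟨fun i => (parseval_sq (S (hb H i))).1, ?_⟩
    refine hHS.congr fun i => ((parseval_sq (S (hb H i))).2).symm
  have hC2 : Summable fun p : hbIdx H × hbIdx H =>
      ‖(inner ℂ (S (hb H p.2)) (B (hb H p.1)) : ℂ)‖ ^ 2 := by
    have hsw : Summable fun q : hbIdx H × hbIdx H =>
        ‖(inner ℂ (B (S (hb H q.1))) (hb H q.2) : ℂ)‖ ^ 2 := by
      rw [summable_prod_of_nonneg (fun p => by positivity)]
      refine ⟨fun j => (parseval_sq (B (S (hb H j)))).1, ?_⟩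
      have hbound : ∀ j : hbIdx H, ∑' i, ‖(inner ℂ (B (S (hb H j))) (hb H i) : ℂ)‖ ^ 2
          ≤ ‖B‖ ^ 2 * ‖S (hb H j)‖ ^ 2 := by
        intro j
        rw [(parseval_sq (B (S (hb H j)))).2]
        have h3 := B.le_opNorm (S (hb H j))
        calc ‖B (S (hb H j))‖ ^ 2 ≤ (‖B‖ * ‖S (hb H j)‖) ^ 2 := by
              apply pow_le_pow_left₀ (norm_nonneg _) h3
          _ = ‖B‖ ^ 2 * ‖S (hb H j)‖ ^ 2 := by ring
      exact Summable.of_nonneg_of_le (fun j => tsum_nonneg fun i => by positivity) hbound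
        (hHS.mul_left (‖B‖ ^ 2))
    have h4 := (Equiv.prodComm (hbIdx H) (hbIdx H)).summable_iff.mpr hsw
    refine h4.congr fun p => ?_
    simp only [Function.comp_apply, Equiv.prodComm_apply, Prod.fst_swap, Prod.snd_swap]
    rw [hBsymm (S (hb H p.2)) (hb H p.1)]
  have hFs : Summable F := by
    refine Summable.of_norm_bounded ((hA2.add hC2).div_const 2) fun p => ?_
    simp only [hF]
    set x := ‖(inner ℂ (S (hb H p.1)) (hb H p.2) : ℂ)‖
    set y := ‖(inner ℂ (S (hb H p.2)) (B (hb H p.1)) : ℂ)‖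
    have : ‖(inner ℂ (S (hb H p.1)) (hb H p.2) : ℂ) * (inner ℂ (S (hb H p.2)) (B (hb H p.1)) : ℂ)‖
        = x * y := norm_mul _ _
    rw [this]
    nlinarith [sq_nonneg (x - y)]
  -- termwise identity
  have hterm : ∀ i : hbIdx H, (inner ℂ (hb H i) ((ω ∘L B) (hb H i)) : ℂ) = ∑' j, F (i, j) := by
    intro i
    have h1 : (inner ℂ (hb H i) ((ω ∘L B) (hb H i)) : ℂ)
        = inner ℂ (S (hb H i)) (S (B (hb H i))) := by
      rw [hsymm, ← hSS]; rfl
    rw [h1, ← (hb H).tsum_inner_mul_inner (S (hb H i)) (S (B (hb H i)))]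
    refine tsum_congr fun j => ?_
    simp only [hF]
    rw [← hsymm (hb H j) (B (hb H i))]
  -- swap the order of summation
  have hswap : trace (ω ∘L B) = ∑' j : hbIdx H, ∑' i : hbIdx H, F (i, j) := by
    have h5 : trace (ω ∘L B) = ∑' p : hbIdx H × hbIdx H, F p := by
      rw [trace, Summable.tsum_prod hFs]
      exact tsum_congr hterm
    have h6 : Summable fun q : hbIdx H × hbIdx H => F (q.2, q.1) := by
      refine ((Equiv.prodComm (hbIdx H) (hbIdx H)).summable_iff.mpr hFs).congr fun q => rfl
    have h8 : ∑' p : hbIdx H × hbIdx H, F p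
        = ∑' q : hbIdx H × hbIdx H, F (q.2, q.1) := by
      rw [← (Equiv.prodComm (hbIdx H) (hbIdx H)).tsum_eq (fun q : hbIdx H × hbIdx H => F (q.2, q.1))]
      exact tsum_congr fun a => rfl
    rw [h5, h8, Summable.tsum_prod h6]
  -- evaluate the inner sums
  have hinner : ∀ j : hbIdx H, ∑' i : hbIdx H, F (i, j)
      = (inner ℂ (B (S (hb H j))) (S (hb H j)) : ℂ) := by
    intro j
    have h7 : ∀ i : hbIdx H, F (i, j) =
        (starRingEnd ℂ) ((inner ℂ (S (hb H j)) (hb H i) : ℂ) *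
          (inner ℂ (hb H i) (B (S (hb H j))) : ℂ)) := by
      intro i
      simp only [hF]
      rw [map_mul]
      congr 1
      · rw [hsymm (hb H i) (hb H j), inner_conj_symm]
      · rw [inner_conj_symm]
        rw [hBsymm (S (hb H j)) (hb H i)]
    calc ∑' i : hbIdx H, F (i, j)
        = ∑' i : hbIdx H, (starRingEnd ℂ) ((inner ℂ (S (hb H j)) (hb H i) : ℂ) *
            (inner ℂ (hb H i) (B (S (hb H j))) : ℂ)) := tsum_congr h7
      _ = (starRingEnd ℂ) (∑' i : hbIdx H, (inner ℂ (S (hb H j)) (hb H i) : ℂ) *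
            (inner ℂ (hb H i) (B (S (hb H j))) : ℂ)) := by
          exact (tsum_star (f := fun i : hbIdx H => (inner ℂ (S (hb H j)) (hb H i) : ℂ) *
            (inner ℂ (hb H i) (B (S (hb H j))) : ℂ))).symm
      _ = (starRingEnd ℂ) (inner ℂ (S (hb H j)) (B (S (hb H j))) : ℂ) := by
          rw [(hb H).tsum_inner_mul_inner]
      _ = inner ℂ (B (S (hb H j))) (S (hb H j)) := inner_conj_symm _ _
  -- each inner sum is a nonnegative real
  have hreal : ∀ j : hbIdx H, (inner ℂ (B (S (hb H j))) (S (hb H j)) : ℂ)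
      = ((RCLike.re (inner ℂ (B (S (hb H j))) (S (hb H j)) : ℂ) : ℝ) : ℂ) ∧
      0 ≤ RCLike.re ((inner ℂ (B (S (hb H j))) (S (hb H j))) : ℂ) := by
    intro j
    have := (ContinuousLinearMap.isPositive_iff_complex B).mp hB (S (hb H j))
    exact ⟨(this.1).symm, this.2⟩
  refine ⟨∑' j : hbIdx H, RCLike.re ((inner ℂ (B (S (hb H j))) (S (hb H j))) : ℂ),
    tsum_nonneg fun j => (hreal j).2, ?_⟩
  rw [hswap, Complex.ofReal_tsum]
  refine tsum_congr fun j => ?_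
  rw [hinner j]
  exact (hreal j).1


lemma trace_comp_rankOne (T : H →L[ℂ] H) (x : H) :
    trace (T ∘L (innerSL ℂ x).smulRight x) = inner ℂ x (T x) := by
  rw [trace]
  have h : ∀ i : hbIdx H, (inner ℂ (hb H i) ((T ∘L (innerSL ℂ x).smulRight x) (hb H i)) : ℂ)
      = (inner ℂ x (hb H i) : ℂ) * (inner ℂ (hb H i) (T x) : ℂ) := by
    intro i
    have h1 : (T ∘L (innerSL ℂ x).smulRight x) (hb H i) = (inner ℂ x (hb H i) : ℂ) • T x := by
      simp [ContinuousLinearMap.smulRight_apply]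
    rw [h1, inner_smul_right]
  rw [tsum_congr h, (hb H).tsum_inner_mul_inner x (T x)]

lemma rankOne_pos (x : H) : ((innerSL ℂ x).smulRight x).IsPositive := by
  apply isPositive_of_inner
  intro y
  have h2 : (inner ℂ y (((innerSL ℂ x).smulRight x) y) : ℂ)
      = (inner ℂ x y : ℂ) * (starRingEnd ℂ) (inner ℂ x y : ℂ) := by
    simp only [ContinuousLinearMap.smulRight_apply, innerSL_apply_apply, inner_smul_right]
    rw [← inner_conj_symm y x]
  rw [h2, Complex.mul_conj]
  constructor
  · simp
  · simp [Complex.normSq_nonneg]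

lemma zero_ptc : IsPositiveTraceClass (0 : H →L[ℂ] H) := by
  refine ⟨ContinuousLinearMap.isPositive_zero, ?_⟩
  refine summable_zero.congr fun i => ?_
  simp

lemma isTraceClass_of_isState {T : H →L[ℂ] H} (h : IsState T) : IsTraceClass T :=
  ⟨T, 0, 0, 0, h.1, zero_ptc, zero_ptc, zero_ptc, by simp⟩

lemma summable_re_diag {T : H →L[ℂ] H} (hT : IsTraceClass T) :
    Summable fun i : hbIdx H => ((inner ℂ (hb H i) (T (hb H i)) : ℂ)).re := by
  obtain ⟨A, B, C, D, hA, hB, hC, hD, rfl⟩ := hT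
  refine (hA.2.sub hB.2).congr fun i => ?_
  have hc := (inner_real_of_pos hC.1 (hb H i)).1
  have hd := (inner_real_of_pos hD.1 (hb H i)).1
  simp only [ContinuousLinearMap.add_apply, ContinuousLinearMap.sub_apply,
    ContinuousLinearMap.smul_apply, inner_add_right, inner_sub_right, inner_smul_right,
    Complex.add_re, Complex.sub_re, Complex.mul_re, Complex.mul_im, Complex.I_re, Complex.I_im,
    Complex.sub_im, hc, hd]
  ring

lemma channel_pos {ψ : (HR →L[ℂ] HR) → (HR' →L[ℂ] HR')} (hψ : IsChannel ψ)
    {B : HR →L[ℂ] HR} (hB : B.IsPositive) : (ψ B).IsPositive := by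
  have hBpos : (0 : HR →L[ℂ] HR) ≤ B := (ContinuousLinearMap.nonneg_iff_isPositive B).mpr hB
  set S : HR →L[ℂ] HR := CFC.sqrt B with hS
  have hSpos : S.IsPositive := (ContinuousLinearMap.nonneg_iff_isPositive S).mp (CFC.sqrt_nonneg B)
  have hSS : S ∘L S = B := CFC.sqrt_mul_sqrt_self B hBpos
  apply isPositive_of_inner
  intro x
  have h := hψ.completelyPositive 1 (fun _ => S) (fun _ => x)
  simp only [Fin.sum_univ_one] at h
  rw [hSpos.isSelfAdjoint.adjoint_eq, hSS] at h
  exact ⟨h.2, h.1⟩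


end QRF


open QRF

/-- A channel pushes POVMs to POVMs, and `∫ f ⊗ d(ψ∘E) = (1 ⊗ ψ)(∫ f ⊗ dE)`, the latter
expressed through expectation values on product states via the predual of `ψ`. -/
theorem statement2 {Ω HS HR HR' HT HT' : Type*}
    [TopologicalSpace Ω] [MeasurableSpace Ω] [BorelSpace Ω]
    [NormedAddCommGroup HS] [InnerProductSpace ℂ HS] [CompleteSpace HS]
    [NormedAddCommGroup HR] [InnerProductSpace ℂ HR] [CompleteSpace HR]
    [NormedAddCommGroup HR'] [InnerProductSpace ℂ HR'] [CompleteSpace HR']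
    [NormedAddCommGroup HT] [InnerProductSpace ℂ HT] [CompleteSpace HT]
    [NormedAddCommGroup HT'] [InnerProductSpace ℂ HT'] [CompleteSpace HT']
    (E : Set Ω → (HR →L[ℂ] HR)) (hE : IsPOVM E)
    (ψ : (HR →L[ℂ] HR) → (HR' →L[ℂ] HR')) (hψ : IsChannel ψ)
    (f : Ω → HS →L[ℂ] HS) (hf : UWContinuousBounded f)
    (tm : HilbertTensor HS HR HT) (tm' : HilbertTensor HS HR' HT') :
    IsPOVM (fun X : Set Ω => ψ (E X)) ∧
    ∀ (A : HT →L[ℂ] HT) (A' : HT' →L[ℂ] HT'),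
      IsOVIntegral tm f E A → IsOVIntegral tm' f (fun X : Set Ω => ψ (E X)) A' →
      ∀ ρ ω' ω ρω ρω', IsState ρ → IsState ω' → IsState ω →
        (∀ B : HR →L[ℂ] HR, trace (ω' ∘L ψ B) = trace (ω ∘L B)) →
        tm.IsTensorOp ρ ω ρω → tm'.IsTensorOp ρ ω' ρω' →
        trace (ρω' ∘L A') = trace (ρω ∘L A) := by
  classical
  have hPOVM : IsPOVM (fun X : Set Ω => ψ (E X)) := by
    refine ⟨fun X hX => ?_, ?_, fun ω' hω' => ?_⟩
    · obtain ⟨h1, h2⟩ := hE.1 X hX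
      refine ⟨channel_pos hψ h1, ?_⟩
      have hsub : ψ (1 - E X) = ψ 1 - ψ (E X) :=
        map_sub (IsLinearMap.mk' ψ hψ.linear) 1 (E X)
      have : (1 : HR' →L[ℂ] HR') - ψ (E X) = ψ (1 - E X) := by
        rw [hsub, hψ.unital]
      rw [this]
      exact channel_pos hψ h2
    · simp only [hE.2.1, hψ.unital]
    · obtain ⟨ω'', hω''tc, hdual⟩ := hψ.normal ω' (isTraceClass_of_isState hω')
      have hpos : ω''.IsPositive := by
        apply isPositive_of_inner
        intro x
        have h1 : (inner ℂ x (ω'' x) : ℂ) = trace (ω'' ∘L (innerSL ℂ x).smulRight x) :=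
          (trace_comp_rankOne ω'' x).symm
        rw [h1, ← hdual ((innerSL ℂ x).smulRight x)]
        obtain ⟨r, hr, heq⟩ := trace_comp_pos hω' (channel_pos hψ (rankOne_pos x))
        rw [heq]
        constructor
        · simp
        · simpa using hr
      have hsum := summable_re_diag hω''tc
      have htr : trace ω'' = 1 := by
        have h1 := hdual 1
        rw [hψ.unital] at h1
        have h2 : ω' ∘L 1 = ω' := ContinuousLinearMap.comp_id ω'
        have h3 : ω'' ∘L 1 = ω'' := ContinuousLinearMap.comp_id ω''
        rw [h2, h3] at h1
        rw [← h1, hω'.2]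
      obtain ⟨μ, hμp, hμ⟩ := hE.2.2 ω'' ⟨⟨hpos, hsum⟩, htr⟩
      exact ⟨μ, hμp, fun X hX => by rw [hμ X hX, ← hdual (E X)]⟩
  refine ⟨hPOVM, ?_⟩
  intro A A' hA hA' ρ ω' ω ρω ρω' hρ hω' hω hpre htm htm'
  have hex1 := hPOVM.2.2 ω' hω'
  have hex2 := hE.2.2 ω hω
  have hm : bornMeasure (fun X : Set Ω => ψ (E X)) ω' = bornMeasure E ω := by
    rw [bornMeasure, bornMeasure, dif_pos hex1, dif_pos hex2]
    have s1 := hex1.choose_spec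
    have s2 := hex2.choose_spec
    haveI := s1.1
    haveI := s2.1
    ext s hs
    have e1 := s1.2 s hs
    have e2 := s2.2 s hs
    have h9 : (hex1.choose s).toReal = (hex2.choose s).toReal := by
      rw [e1, e2, hpre (E s)]
    exact (ENNReal.toReal_eq_toReal_iff' (measure_ne_top _ _) (measure_ne_top _ _)).mp h9
  rw [hA' ρ ω' ρω' hρ hω' htm', hA ρ ω ρω hρ hω htm, hm]
end
end

section
/- Let f : Σ → B(H_S) be ultraweakly continuous and bounded and E a POVM on Σ with values in B(H_R). Then the assignment sending a pair of states (ρ, ω) on (H_S, H_R) to the number ∫_Σ tr(ρ f(x)) dμ^E_ω(x) extends uniquely to a bilinear functional on T(H_S) × T(H_R) (the spaces of trace-class operators), and this bilinear functional is bounded: its values on pairs of states are bounded in absolute value by sup_{x∈Σ} ‖f(x)‖. -/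
open MeasureTheory ContinuousLinearMap
open scoped ENNReal

noncomputable section

open QRF

/-- Bilinearity (on trace-class pairs) of a functional on pairs of operators. -/
def BilinearOnTraceClass {HS HR : Type*}
    [NormedAddCommGroup HS] [InnerProductSpace ℂ HS] [CompleteSpace HS]
    [NormedAddCommGroup HR] [InnerProductSpace ℂ HR] [CompleteSpace HR]
    (β : (HS →L[ℂ] HS) → (HR →L[ℂ] HR) → ℂ) : Prop :=
  (∀ ρ ρ' ω, IsTraceClass ρ → IsTraceClass ρ' → IsTraceClass ω →
    β (ρ + ρ') ω = β ρ ω + β ρ' ω) ∧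
  (∀ (c : ℂ) ρ ω, IsTraceClass ρ → IsTraceClass ω → β (c • ρ) ω = c * β ρ ω) ∧
  (∀ ρ ω ω', IsTraceClass ρ → IsTraceClass ω → IsTraceClass ω' →
    β ρ (ω + ω') = β ρ ω + β ρ ω') ∧
  (∀ (c : ℂ) ρ ω, IsTraceClass ρ → IsTraceClass ω → β ρ (c • ω) = c * β ρ ω)

namespace QRFAux
open QRF

variable {H : Type*} [NormedAddCommGroup H] [InnerProductSpace ℂ H] [CompleteSpace H]

lemma re_conj_mul (z : ℂ) : (starRingEnd ℂ z * z).re = ‖z‖ ^ 2 := by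
  simp only [Complex.mul_re, Complex.conj_re, Complex.conj_im, Complex.sq_norm, Complex.normSq_apply]
  ring

/-- Parseval for the chosen basis. -/
lemma hasSum_parseval (x : H) :
    HasSum (fun i : hbIdx H => ‖(inner ℂ (hb H i) x : ℂ)‖ ^ 2) (‖x‖ ^ 2) := by
  have h := (hb H).hasSum_inner_mul_inner x x
  have h2 := h.mapL Complex.reCLM
  have e1 : (fun i : hbIdx H =>
      Complex.reCLM ((inner ℂ x (hb H i) : ℂ) * (inner ℂ (hb H i) x : ℂ)))
      = fun i : hbIdx H => ‖(inner ℂ (hb H i) x : ℂ)‖ ^ 2 := by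
    funext i
    have : (inner ℂ x (hb H i) : ℂ) = starRingEnd ℂ (inner ℂ (hb H i) x : ℂ) :=
      (inner_conj_symm _ _).symm
    rw [Complex.reCLM_apply, this, re_conj_mul]
  have e2 : Complex.reCLM (inner ℂ x x : ℂ) = ‖x‖ ^ 2 := by
    have := inner_self_eq_norm_sq (𝕜 := ℂ) x
    simpa using this
  rw [e1, e2] at h2
  exact h2

lemma tsum_ofReal_parseval (x : H) :
    ∑' i : hbIdx H, ENNReal.ofReal (‖(inner ℂ (hb H i) x : ℂ)‖ ^ 2)
      = ENNReal.ofReal (‖x‖ ^ 2) := by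
  rw [← ENNReal.ofReal_tsum_of_nonneg (fun i => sq_nonneg _) (hasSum_parseval x).summable,
    (hasSum_parseval x).tsum_eq]

/-- Square root of a positive operator. -/
lemma exists_sqrt {A : H →L[ℂ] H} (hA : A.IsPositive) :
    ∃ R : H →L[ℂ] H, R.IsPositive ∧ R ∘L R = A :=
  ⟨CFC.sqrt A, (nonneg_iff_isPositive _).1 (CFC.sqrt_nonneg _),
    CFC.sqrt_mul_sqrt_self A ((nonneg_iff_isPositive A).2 hA)⟩

lemma isSelfAdjoint_inner_real {T : H →L[ℂ] H} (hT : IsSelfAdjoint T) (x : H) :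
    (inner ℂ x (T x) : ℂ) = (((inner ℂ x (T x) : ℂ)).re : ℂ) := by
  have h1 : (inner ℂ x (T x) : ℂ) = inner ℂ (T x) x := by
    rw [← ContinuousLinearMap.adjoint_inner_left, isSelfAdjoint_iff'.mp hT]
  have h2 : (inner ℂ (T x) x : ℂ) = starRingEnd ℂ (inner ℂ x (T x) : ℂ) :=
    (inner_conj_symm _ _).symm
  have him : (inner ℂ x (T x) : ℂ).im = 0 := by
    have h3 := congrArg Complex.im (h1.trans h2)
    rw [Complex.conj_im] at h3
    linarith
  exact Complex.ext (by simp) (by simp [him])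

lemma isPositive_inner_nonneg {T : H →L[ℂ] H} (hT : T.IsPositive) (x : H) :
    0 ≤ (inner ℂ x (T x) : ℂ).re := by
  have := hT.inner_nonneg_right x
  exact (Complex.nonneg_iff.mp this).1

end QRFAux

namespace QRFAux2
open QRF QRFAux Real

variable {H : Type*} [NormedAddCommGroup H] [InnerProductSpace ℂ H] [CompleteSpace H]

/-- Cauchy–Schwarz for tsums. -/
lemma tsum_mul_le_sqrt_mul_sqrt {ι : Type*} (a b : ι → ℝ)
    (hab : Summable (fun i => a i * b i)) (hab0 : ∀ i, 0 ≤ a i * b i)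
    (ha2 : Summable (fun i => a i ^ 2)) (hb2 : Summable (fun i => b i ^ 2)) :
    ∑' i, a i * b i ≤ √(∑' i, a i ^ 2) * √(∑' i, b i ^ 2) := by
  refine Summable.tsum_le_of_sum_le hab fun s => ?_
  calc ∑ i ∈ s, a i * b i
      ≤ √(∑ i ∈ s, a i ^ 2) * √(∑ i ∈ s, b i ^ 2) := Real.sum_mul_le_sqrt_mul_sqrt s a b
    _ ≤ √(∑' i, a i ^ 2) * √(∑' i, b i ^ 2) := by
        apply mul_le_mul
        · exact Real.sqrt_le_sqrt (Summable.sum_le_tsum s (fun i _ => sq_nonneg _) ha2)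
        · exact Real.sqrt_le_sqrt (Summable.sum_le_tsum s (fun i _ => sq_nonneg _) hb2)
        · exact Real.sqrt_nonneg _
        · exact Real.sqrt_nonneg _

section PosTC

variable {A : H →L[ℂ] H}

lemma posTC_summable_diag (hA : IsPositiveTraceClass A) :
    Summable (fun i : hbIdx H => (inner ℂ (hb H i) (A (hb H i)) : ℂ)) := by
  have e : (fun i : hbIdx H => (inner ℂ (hb H i) (A (hb H i)) : ℂ))
      = fun i : hbIdx H => (((inner ℂ (hb H i) (A (hb H i)) : ℂ).re : ℝ) : ℂ) :=
    funext fun i => isSelfAdjoint_inner_real hA.1.isSelfAdjoint _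
  rw [e]
  exact hA.2.map Complex.ofRealCLM Complex.ofRealCLM.continuous

lemma trace_posTC (hA : IsPositiveTraceClass A) :
    trace A = ((∑' i : hbIdx H, (inner ℂ (hb H i) (A (hb H i)) : ℂ).re : ℝ) : ℂ) := by
  rw [trace, Complex.ofReal_tsum]
  exact tsum_congr fun i => isSelfAdjoint_inner_real hA.1.isSelfAdjoint _

lemma trace_posTC_re (hA : IsPositiveTraceClass A) :
    (trace A).re = ∑' i : hbIdx H, (inner ℂ (hb H i) (A (hb H i)) : ℂ).re := by
  rw [trace_posTC hA, Complex.ofReal_re]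

lemma trace_posTC_re_nonneg (hA : IsPositiveTraceClass A) : 0 ≤ (trace A).re := by
  rw [trace_posTC_re hA]
  exact tsum_nonneg fun i => isPositive_inner_nonneg hA.1 _

lemma trace_posTC_eq_re (hA : IsPositiveTraceClass A) :
    trace A = (((trace A).re : ℝ) : ℂ) := by
  rw [trace_posTC hA, Complex.ofReal_re]

/-- diagonal entries via the square root. -/
lemma diag_eq_sq_norm {R : H →L[ℂ] H} (hR : R.IsPositive) (hRR : R ∘L R = A) (x : H) :
    (inner ℂ x (A x) : ℂ).re = ‖R x‖ ^ 2 := by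
  have h1 : A x = R (R x) := by rw [← hRR]; rfl
  have h2 : (inner ℂ x (R (R x)) : ℂ) = inner ℂ (R x) (R x) := by
    rw [← ContinuousLinearMap.adjoint_inner_left, isSelfAdjoint_iff'.mp hR.isSelfAdjoint]
  rw [h1, h2]
  exact inner_self_eq_norm_sq (𝕜 := ℂ) (R x)

set_option maxHeartbeats 800000 in
lemma posTC_eq_zero_of_trace (hA : IsPositiveTraceClass A) (h : (trace A).re = 0) :
    A = 0 := by
  obtain ⟨R, hR, hRR⟩ := exists_sqrt hA.1
  have h0 : ∑' i : hbIdx H, (inner ℂ (hb H i) (A (hb H i)) : ℂ).re = 0 := by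
    rw [← trace_posTC_re hA]; exact h
  have hzero : ∀ i : hbIdx H, (inner ℂ (hb H i) (A (hb H i)) : ℂ).re = 0 := by
    intro i
    have hle := Summable.le_tsum hA.2 i (fun j _ => isPositive_inner_nonneg hA.1 _)
    have hge := isPositive_inner_nonneg hA.1 (hb H i)
    rw [h0] at hle
    linarith
  have hRz : ∀ i : hbIdx H, R (hb H i) = 0 := by
    intro i
    have := hzero i
    rw [diag_eq_sq_norm hR hRR] at this
    have := sq_eq_zero_iff.mp this
    exact norm_eq_zero.mp this
  have hR0 : R = 0 := by
    apply ContinuousLinearMap.ext_on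
      (Submodule.dense_iff_topologicalClosure_eq_top.mpr ((hb H).dense_span))
    rintro x ⟨i, rfl⟩
    simp [hRz i]
  rw [← hRR, hR0]
  ext x
  simp

/-- The key summability-and-bound lemma: for a positive trace-class `A` and bounded `T`,
the diagonal of `A ∘L T` is summable and the trace is bounded by `tr A * ‖T‖`. -/
lemma posTC_comp (hA : IsPositiveTraceClass A) (T : H →L[ℂ] H) :
    Summable (fun i : hbIdx H => (inner ℂ (hb H i) ((A ∘L T) (hb H i)) : ℂ)) ∧
    ‖trace (A ∘L T)‖ ≤ (trace A).re * ‖T‖ := by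
  obtain ⟨R, hR, hRR⟩ := exists_sqrt hA.1
  have hRsa : ContinuousLinearMap.adjoint R = R := isSelfAdjoint_iff'.mp hR.isSelfAdjoint
  set e : hbIdx H → H := fun i => hb H i with he
  -- rewrite terms
  have hterm : ∀ i, (inner ℂ (e i) ((A ∘L T) (e i)) : ℂ) = inner ℂ (R (e i)) (R (T (e i))) := by
    intro i
    have h1 : (A ∘L T) (e i) = R (R (T (e i))) := by rw [← hRR]; rfl
    rw [h1, ← ContinuousLinearMap.adjoint_inner_left, hRsa]
  set a : hbIdx H → ℝ := fun i => ‖R (e i)‖ with ha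
  set b : hbIdx H → ℝ := fun i => ‖R (T (e i))‖ with hbdef
  have ha2 : Summable (fun i => a i ^ 2) := by
    have : (fun i => a i ^ 2) = fun i : hbIdx H => (inner ℂ (e i) (A (e i)) : ℂ).re := by
      funext i; rw [diag_eq_sq_norm hR hRR]
    rw [this]; exact hA.2
  have ha2sum : ∑' i, a i ^ 2 = (trace A).re := by
    rw [trace_posTC_re hA]
    exact tsum_congr fun i => by rw [diag_eq_sq_norm hR hRR]
  -- ENNReal bound for b
  have key : ∑' i, ENNReal.ofReal (b i ^ 2) ≤ ENNReal.ofReal (‖T‖ ^ 2 * (trace A).re) := by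
    have step1 : ∀ i, ENNReal.ofReal (b i ^ 2)
        = ∑' j : hbIdx H, ENNReal.ofReal (‖(inner ℂ (e j) (R (T (e i))) : ℂ)‖ ^ 2) := by
      intro i
      rw [tsum_ofReal_parseval (R (T (e i)))]
    have step2 : ∀ i j, ‖(inner ℂ (e j) (R (T (e i))) : ℂ)‖
        = ‖(inner ℂ (e i) ((ContinuousLinearMap.adjoint T) (R (e j))) : ℂ)‖ := by
      intro i j
      have h1 : (inner ℂ (e j) (R (T (e i))) : ℂ) = inner ℂ (R (e j)) (T (e i)) := by
        rw [← ContinuousLinearMap.adjoint_inner_left, hRsa]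
      have h2 : (inner ℂ (R (e j)) (T (e i)) : ℂ)
          = inner ℂ ((ContinuousLinearMap.adjoint T) (R (e j))) (e i) := by
        rw [ContinuousLinearMap.adjoint_inner_left]
      rw [h1, h2, ← inner_conj_symm]
      exact (RCLike.norm_conj _)
    calc ∑' i, ENNReal.ofReal (b i ^ 2)
        = ∑' (i) (j), ENNReal.ofReal (‖(inner ℂ (e j) (R (T (e i))) : ℂ)‖ ^ 2) := by
          exact tsum_congr step1
      _ = ∑' (j) (i), ENNReal.ofReal (‖(inner ℂ (e j) (R (T (e i))) : ℂ)‖ ^ 2) :=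
          ENNReal.tsum_comm
      _ = ∑' (j) (i), ENNReal.ofReal
            (‖(inner ℂ (e i) ((ContinuousLinearMap.adjoint T) (R (e j))) : ℂ)‖ ^ 2) := by
          refine tsum_congr fun j => tsum_congr fun i => by rw [step2]
      _ = ∑' j : hbIdx H, ENNReal.ofReal (‖(ContinuousLinearMap.adjoint T) (R (e j))‖ ^ 2) :=
          tsum_congr fun j => tsum_ofReal_parseval _
      _ ≤ ∑' j : hbIdx H, ENNReal.ofReal (‖T‖ ^ 2 * a j ^ 2) := by
          refine ENNReal.tsum_le_tsum fun j => ENNReal.ofReal_le_ofReal ?_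
          have h1 : ‖(ContinuousLinearMap.adjoint T) (R (e j))‖ ≤ ‖T‖ * a j := by
            calc ‖(ContinuousLinearMap.adjoint T) (R (e j))‖
                ≤ ‖ContinuousLinearMap.adjoint T‖ * ‖R (e j)‖ :=
                  ContinuousLinearMap.le_opNorm _ _
              _ = ‖T‖ * a j := by
                  rw [LinearIsometryEquiv.norm_map]
          calc ‖(ContinuousLinearMap.adjoint T) (R (e j))‖ ^ 2
              ≤ (‖T‖ * a j) ^ 2 := by
                apply sq_le_sq' _ h1
                have : 0 ≤ ‖T‖ * a j := mul_nonneg (norm_nonneg _) (norm_nonneg _)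
                nlinarith [norm_nonneg ((ContinuousLinearMap.adjoint T) (R (e j)))]
            _ = ‖T‖ ^ 2 * a j ^ 2 := by ring
      _ = ENNReal.ofReal (‖T‖ ^ 2) * ∑' j, ENNReal.ofReal (a j ^ 2) := by
          rw [← ENNReal.tsum_mul_left]
          exact tsum_congr fun j => by
            rw [← ENNReal.ofReal_mul (sq_nonneg _)]
      _ = ENNReal.ofReal (‖T‖ ^ 2) * ENNReal.ofReal (∑' j, a j ^ 2) := by
          rw [ENNReal.ofReal_tsum_of_nonneg (fun j => sq_nonneg _) ha2]
      _ = ENNReal.ofReal (‖T‖ ^ 2 * (trace A).re) := by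
          rw [← ENNReal.ofReal_mul (sq_nonneg _), ha2sum]
  have hb2 : Summable (fun i => b i ^ 2) := by
    have hne : ∑' i, ENNReal.ofReal (b i ^ 2) ≠ ∞ :=
      ne_top_of_le_ne_top ENNReal.ofReal_ne_top key
    have := ENNReal.summable_toReal hne
    simpa [ENNReal.toReal_ofReal (sq_nonneg _)] using this
  have hb2sum : ∑' i, b i ^ 2 ≤ ‖T‖ ^ 2 * (trace A).re := by
    have h1 : ENNReal.ofReal (∑' i, b i ^ 2) ≤ ENNReal.ofReal (‖T‖ ^ 2 * (trace A).re) := by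
      rw [ENNReal.ofReal_tsum_of_nonneg (fun i => sq_nonneg _) hb2]
      exact key
    exact (ENNReal.ofReal_le_ofReal_iff
      (mul_nonneg (sq_nonneg _) (trace_posTC_re_nonneg hA))).mp h1
  have hab : Summable (fun i => a i * b i) := by
    apply Summable.of_nonneg_of_le (fun i => mul_nonneg (norm_nonneg _) (norm_nonneg _))
      (fun i => ?_) (((ha2.add hb2).div_const 2))
    have h2 := two_mul_le_add_sq (a i) (b i)
    show a i * b i ≤ (a i ^ 2 + b i ^ 2) / 2
    linarith
  have hnorm : ∀ i, ‖(inner ℂ (e i) ((A ∘L T) (e i)) : ℂ)‖ ≤ a i * b i := by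
    intro i
    rw [hterm i]
    exact norm_inner_le_norm _ _
  have hsummable : Summable (fun i : hbIdx H => (inner ℂ (e i) ((A ∘L T) (e i)) : ℂ)) :=
    Summable.of_norm_bounded hab hnorm
  refine ⟨hsummable, ?_⟩
  have hsumnorm : Summable (fun i => ‖(inner ℂ (e i) ((A ∘L T) (e i)) : ℂ)‖) :=
    Summable.of_nonneg_of_le (fun i => norm_nonneg _) hnorm hab
  calc ‖trace (A ∘L T)‖
      ≤ ∑' i, ‖(inner ℂ (e i) ((A ∘L T) (e i)) : ℂ)‖ := norm_tsum_le_tsum_norm hsumnorm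
    _ ≤ ∑' i, a i * b i := Summable.tsum_le_tsum hnorm hsumnorm hab
    _ ≤ √(∑' i, a i ^ 2) * √(∑' i, b i ^ 2) :=
        tsum_mul_le_sqrt_mul_sqrt a b hab
          (fun i => mul_nonneg (norm_nonneg _) (norm_nonneg _)) ha2 hb2
    _ ≤ √((trace A).re) * √(‖T‖ ^ 2 * (trace A).re) := by
        apply mul_le_mul
        · exact Real.sqrt_le_sqrt (le_of_eq ha2sum)
        · exact Real.sqrt_le_sqrt hb2sum
        · exact Real.sqrt_nonneg _
        · exact Real.sqrt_nonneg _
    _ = (trace A).re * ‖T‖ := by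
        rw [Real.sqrt_mul (sq_nonneg _), Real.sqrt_sq (norm_nonneg _)]
        rw [show √(trace A).re * (‖T‖ * √(trace A).re)
            = √(trace A).re * √(trace A).re * ‖T‖ from by ring,
          Real.mul_self_sqrt (trace_posTC_re_nonneg hA)]

end PosTC

end QRFAux2

namespace QRFAux3
open QRF QRFAux QRFAux2

variable {H : Type*} [NormedAddCommGroup H] [InnerProductSpace ℂ H] [CompleteSpace H]

lemma trace_zero : trace (0 : H →L[ℂ] H) = 0 := by
  simp [trace]

lemma zero_comp' (T : H →L[ℂ] H) : (0 : H →L[ℂ] H) ∘L T = 0 :=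
  ContinuousLinearMap.zero_comp T

lemma diag_decomp (A B C D T : H →L[ℂ] H) :
    (fun i : hbIdx H =>
        (inner ℂ (hb H i) (((A - B + Complex.I • (C - D)) ∘L T) (hb H i)) : ℂ))
      = fun i : hbIdx H =>
        (inner ℂ (hb H i) ((A ∘L T) (hb H i)) : ℂ)
          - (inner ℂ (hb H i) ((B ∘L T) (hb H i)) : ℂ)
          + Complex.I * ((inner ℂ (hb H i) ((C ∘L T) (hb H i)) : ℂ)
            - (inner ℂ (hb H i) ((D ∘L T) (hb H i)) : ℂ)) := by
  funext i
  simp only [ContinuousLinearMap.add_comp, ContinuousLinearMap.sub_comp,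
    ContinuousLinearMap.smul_comp, ContinuousLinearMap.add_apply,
    ContinuousLinearMap.sub_apply, ContinuousLinearMap.smul_apply,
    inner_add_right, inner_sub_right, inner_smul_right]

lemma tc_summable {ρ : H →L[ℂ] H} (hρ : IsTraceClass ρ) (T : H →L[ℂ] H) :
    Summable (fun i : hbIdx H => (inner ℂ (hb H i) ((ρ ∘L T) (hb H i)) : ℂ)) := by
  obtain ⟨A, B, C, D, hA, hB, hC, hD, rfl⟩ := hρ
  rw [diag_decomp]
  exact (((posTC_comp hA T).1.sub (posTC_comp hB T).1).add
    (((posTC_comp hC T).1.sub (posTC_comp hD T).1).mul_left Complex.I))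

lemma trace_comp_decomp (A B C D T : H →L[ℂ] H) (hA : IsPositiveTraceClass A)
    (hB : IsPositiveTraceClass B) (hC : IsPositiveTraceClass C) (hD : IsPositiveTraceClass D) :
    trace ((A - B + Complex.I • (C - D)) ∘L T)
      = trace (A ∘L T) - trace (B ∘L T)
        + Complex.I * (trace (C ∘L T) - trace (D ∘L T)) := by
  rw [trace, diag_decomp]
  rw [Summable.tsum_add (((posTC_comp hA T).1.sub (posTC_comp hB T).1))
      ((((posTC_comp hC T).1.sub (posTC_comp hD T).1).mul_left Complex.I)),
    Summable.tsum_sub (posTC_comp hA T).1 (posTC_comp hB T).1,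
    tsum_mul_left,
    Summable.tsum_sub (posTC_comp hC T).1 (posTC_comp hD T).1]
  rfl

lemma trace_comp_add_left {ρ ρ' : H →L[ℂ] H} (hρ : IsTraceClass ρ) (hρ' : IsTraceClass ρ')
    (T : H →L[ℂ] H) :
    trace ((ρ + ρ') ∘L T) = trace (ρ ∘L T) + trace (ρ' ∘L T) := by
  have e : (fun i : hbIdx H => (inner ℂ (hb H i) (((ρ + ρ') ∘L T) (hb H i)) : ℂ))
      = fun i : hbIdx H => (inner ℂ (hb H i) ((ρ ∘L T) (hb H i)) : ℂ)
        + (inner ℂ (hb H i) ((ρ' ∘L T) (hb H i)) : ℂ) := by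
    funext i
    simp only [ContinuousLinearMap.add_comp, ContinuousLinearMap.add_apply, inner_add_right]
  rw [trace, e, Summable.tsum_add (tc_summable hρ T) (tc_summable hρ' T)]
  rfl

lemma trace_comp_smul_left (c : ℂ) (ρ T : H →L[ℂ] H) :
    trace ((c • ρ) ∘L T) = c * trace (ρ ∘L T) := by
  have e : (fun i : hbIdx H => (inner ℂ (hb H i) (((c • ρ) ∘L T) (hb H i)) : ℂ))
      = fun i : hbIdx H => c * (inner ℂ (hb H i) ((ρ ∘L T) (hb H i)) : ℂ) := by
    funext i
    simp only [ContinuousLinearMap.smul_comp, ContinuousLinearMap.smul_apply, inner_smul_right]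
  rw [trace, e, tsum_mul_left]
  rfl

lemma trace_smul (c : ℂ) (A : H →L[ℂ] H) : trace (c • A) = c * trace A := by
  simp only [trace, ContinuousLinearMap.smul_apply, inner_smul_right]
  rw [tsum_mul_left]

lemma tc_bound {ρ : H →L[ℂ] H} (hρ : IsTraceClass ρ) :
    ∃ K : ℝ, 0 ≤ K ∧ ∀ T : H →L[ℂ] H, ‖trace (ρ ∘L T)‖ ≤ K * ‖T‖ := by
  obtain ⟨A, B, C, D, hA, hB, hC, hD, rfl⟩ := hρ
  refine ⟨(trace A).re + (trace B).re + (trace C).re + (trace D).re, ?_, fun T => ?_⟩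
  · have := trace_posTC_re_nonneg hA
    have := trace_posTC_re_nonneg hB
    have := trace_posTC_re_nonneg hC
    have := trace_posTC_re_nonneg hD
    linarith
  · rw [trace_comp_decomp A B C D T hA hB hC hD]
    have h1 := (posTC_comp hA T).2
    have h2 := (posTC_comp hB T).2
    have h3 := (posTC_comp hC T).2
    have h4 := (posTC_comp hD T).2
    calc ‖trace (A ∘L T) - trace (B ∘L T)
          + Complex.I * (trace (C ∘L T) - trace (D ∘L T))‖
        ≤ ‖trace (A ∘L T) - trace (B ∘L T)‖
          + ‖Complex.I * (trace (C ∘L T) - trace (D ∘L T))‖ := norm_add_le _ _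
      _ ≤ ‖trace (A ∘L T)‖ + ‖trace (B ∘L T)‖
          + (‖trace (C ∘L T)‖ + ‖trace (D ∘L T)‖) := by
          rw [norm_mul, Complex.norm_I, one_mul]
          have := norm_sub_le (trace (A ∘L T)) (trace (B ∘L T))
          have := norm_sub_le (trace (C ∘L T)) (trace (D ∘L T))
          linarith
      _ ≤ (trace A).re * ‖T‖ + (trace B).re * ‖T‖
          + ((trace C).re * ‖T‖ + (trace D).re * ‖T‖) := by linarith
      _ = ((trace A).re + (trace B).re + (trace C).re + (trace D).re) * ‖T‖ := by ring

/- Closure properties -/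

lemma posTC_zero : IsPositiveTraceClass (0 : H →L[ℂ] H) := by
  refine ⟨ContinuousLinearMap.isPositive_zero, ?_⟩
  have : (fun i : hbIdx H => ((inner ℂ (hb H i) ((0 : H →L[ℂ] H) (hb H i)) : ℂ)).re)
      = fun _ => 0 := by
    funext i; simp
  rw [this]
  exact summable_zero

lemma posTC_add {A B : H →L[ℂ] H} (hA : IsPositiveTraceClass A)
    (hB : IsPositiveTraceClass B) : IsPositiveTraceClass (A + B) := by
  refine ⟨hA.1.add hB.1, ?_⟩
  have e : (fun i : hbIdx H => ((inner ℂ (hb H i) ((A + B) (hb H i)) : ℂ)).re)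
      = fun i : hbIdx H => ((inner ℂ (hb H i) (A (hb H i)) : ℂ)).re
        + ((inner ℂ (hb H i) (B (hb H i)) : ℂ)).re := by
    funext i
    simp [inner_add_right]
  rw [e]
  exact hA.2.add hB.2

lemma isPositive_real_smul {A : H →L[ℂ] H} (hA : A.IsPositive) {t : ℝ} (ht : 0 ≤ t) :
    (((t : ℂ)) • A).IsPositive := by
  rw [ContinuousLinearMap.isPositive_iff_complex]
  intro x
  obtain ⟨hre, hnn⟩ := (ContinuousLinearMap.isPositive_iff_complex A).mp hA x
  have h1 : (inner ℂ (((t : ℂ) • A) x) x : ℂ) = (t : ℂ) * inner ℂ (A x) x := by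
    rw [ContinuousLinearMap.smul_apply, inner_smul_left, Complex.conj_ofReal]
  have key : (inner ℂ (((t : ℂ) • A) x) x : ℂ)
      = (((t * RCLike.re (inner ℂ (A x) x : ℂ) : ℝ)) : ℂ) := by
    rw [h1, ← hre]
    push_cast
    simp [RCLike.re_to_complex]
  constructor
  · rw [key]
    simp
  · rw [key]
    simpa using mul_nonneg ht hnn

lemma posTC_real_smul {A : H →L[ℂ] H} (hA : IsPositiveTraceClass A) {t : ℝ} (ht : 0 ≤ t) :
    IsPositiveTraceClass ((t : ℂ) • A) := by
  refine ⟨isPositive_real_smul hA.1 ht, ?_⟩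
  have e : (fun i : hbIdx H => ((inner ℂ (hb H i) (((t : ℂ) • A) (hb H i)) : ℂ)).re)
      = fun i : hbIdx H => t * ((inner ℂ (hb H i) (A (hb H i)) : ℂ)).re := by
    funext i
    simp only [ContinuousLinearMap.smul_apply, inner_smul_right]
    simp [Complex.mul_re]
  rw [e]
  exact hA.2.mul_left t

lemma tc_of_pos {A : H →L[ℂ] H} (hA : IsPositiveTraceClass A) : IsTraceClass A :=
  ⟨A, 0, 0, 0, hA, posTC_zero, posTC_zero, posTC_zero, by simp⟩

lemma tc_zero : IsTraceClass (0 : H →L[ℂ] H) := tc_of_pos posTC_zero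

lemma tc_add {ρ ρ' : H →L[ℂ] H} (hρ : IsTraceClass ρ) (hρ' : IsTraceClass ρ') :
    IsTraceClass (ρ + ρ') := by
  obtain ⟨A, B, C, D, hA, hB, hC, hD, rfl⟩ := hρ
  obtain ⟨A', B', C', D', hA', hB', hC', hD', rfl⟩ := hρ'
  refine ⟨A + A', B + B', C + C', D + D', posTC_add hA hA', posTC_add hB hB',
    posTC_add hC hC', posTC_add hD hD', ?_⟩
  rw [smul_sub, smul_sub, smul_sub, smul_add, smul_add]
  abel

lemma tc_neg {ρ : H →L[ℂ] H} (hρ : IsTraceClass ρ) : IsTraceClass (-ρ) := by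
  obtain ⟨A, B, C, D, hA, hB, hC, hD, rfl⟩ := hρ
  refine ⟨B, A, D, C, hB, hA, hD, hC, ?_⟩
  rw [smul_sub, smul_sub]
  abel

lemma tc_I_smul {ρ : H →L[ℂ] H} (hρ : IsTraceClass ρ) : IsTraceClass (Complex.I • ρ) := by
  obtain ⟨A, B, C, D, hA, hB, hC, hD, rfl⟩ := hρ
  refine ⟨D, C, A, B, hD, hC, hA, hB, ?_⟩
  have h1 : Complex.I • (Complex.I • (C - D)) = -(C - D) := by
    rw [smul_smul, Complex.I_mul_I, neg_smul, one_smul]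
  rw [smul_add, h1, smul_sub]
  abel

lemma tc_real_smul_nonneg {ρ : H →L[ℂ] H} (hρ : IsTraceClass ρ) {t : ℝ} (ht : 0 ≤ t) :
    IsTraceClass ((t : ℂ) • ρ) := by
  obtain ⟨A, B, C, D, hA, hB, hC, hD, rfl⟩ := hρ
  refine ⟨(t : ℂ) • A, (t : ℂ) • B, (t : ℂ) • C, (t : ℂ) • D,
    posTC_real_smul hA ht, posTC_real_smul hB ht, posTC_real_smul hC ht,
    posTC_real_smul hD ht, ?_⟩
  rw [smul_add, smul_sub, smul_sub, smul_sub,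
    smul_comm ((t : ℂ)) Complex.I C, smul_comm ((t : ℂ)) Complex.I D]
  rw [← smul_sub Complex.I]

lemma tc_real_smul {ρ : H →L[ℂ] H} (hρ : IsTraceClass ρ) (t : ℝ) :
    IsTraceClass ((t : ℂ) • ρ) := by
  rcases le_or_gt 0 t with ht | ht
  · exact tc_real_smul_nonneg hρ ht
  · have h1 : (t : ℂ) • ρ = -(((-t : ℝ) : ℂ) • ρ) := by
      push_cast
      rw [neg_smul, neg_neg]
    rw [h1]
    exact tc_neg (tc_real_smul_nonneg hρ (by linarith : (0:ℝ) ≤ -t))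

lemma tc_smul {ρ : H →L[ℂ] H} (hρ : IsTraceClass ρ) (c : ℂ) :
    IsTraceClass (c • ρ) := by
  have h1 : c • ρ = (c.re : ℂ) • ρ + (c.im : ℂ) • (Complex.I • ρ) := by
    rw [smul_smul, ← add_smul, Complex.re_add_im]
  rw [h1]
  exact tc_add (tc_real_smul hρ c.re) (tc_real_smul (tc_I_smul hρ) c.im)

end QRFAux3

namespace QRFAux4
open QRF QRFAux QRFAux2 QRFAux3 MeasureTheory

variable {Ω : Type*} [MeasurableSpace Ω]
variable {HR : Type*} [NormedAddCommGroup HR] [InnerProductSpace ℂ HR] [CompleteSpace HR]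

/-- The extension of the Born measure to positive trace-class operators. -/
def nuA (E : Set Ω → (HR →L[ℂ] HR)) (ω : HR →L[ℂ] HR) : Measure Ω :=
  ENNReal.ofReal ((trace ω).re) •
    bornMeasure E (((((trace ω).re)⁻¹ : ℝ) : ℂ) • ω)

variable {E : Set Ω → (HR →L[ℂ] HR)}

lemma bornMeasure_spec (hE : IsPOVM E) {ω : HR →L[ℂ] HR} (hω : IsState ω) :
    IsProbabilityMeasure (bornMeasure E ω) ∧
      ∀ X : Set Ω, MeasurableSet X →
        ((bornMeasure E ω) X).toReal = (trace (ω ∘L E X)).re := by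
  have h := hE.2.2 ω hω
  rw [bornMeasure, dif_pos h]
  exact h.choose_spec

lemma state_normalize {ω : HR →L[ℂ] HR} (hω : IsPositiveTraceClass ω) (hne : ω ≠ 0) :
    0 < (trace ω).re ∧ IsState (((((trace ω).re)⁻¹ : ℝ) : ℂ) • ω) := by
  have hpos : 0 < (trace ω).re :=
    lt_of_le_of_ne (trace_posTC_re_nonneg hω)
      (fun h => hne (posTC_eq_zero_of_trace hω h.symm))
  refine ⟨hpos, ⟨posTC_real_smul hω (inv_nonneg.mpr hpos.le), ?_⟩⟩
  rw [trace_smul]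
  nth_rewrite 2 [trace_posTC_eq_re hω]
  rw [← Complex.ofReal_mul, inv_mul_cancel₀ hpos.ne', Complex.ofReal_one]

lemma trace_comp_real_smul_re (t : ℝ) (ω T : HR →L[ℂ] HR) :
    (trace (((t : ℂ) • ω) ∘L T)).re = t * (trace (ω ∘L T)).re := by
  rw [trace_comp_smul_left]
  simp [Complex.mul_re]

lemma nuA_spec (hE : IsPOVM E) {ω : HR →L[ℂ] HR} (hω : IsPositiveTraceClass ω) :
    IsFiniteMeasure (nuA E ω) ∧
      ∀ X : Set Ω, MeasurableSet X → ((nuA E ω) X).toReal = (trace (ω ∘L E X)).re := by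
  by_cases hne : ω = 0
  · subst hne
    have h0 : nuA E (0 : HR →L[ℂ] HR) = 0 := by
      rw [nuA, trace_zero]
      simp
    rw [h0]
    refine ⟨inferInstance, fun X hX => ?_⟩
    rw [zero_comp', trace_zero]
    simp
  · obtain ⟨hpos, hstate⟩ := state_normalize hω hne
    obtain ⟨hprob, hform⟩ := bornMeasure_spec hE hstate
    set t : ℝ := (trace ω).re with htdef
    have happ : ∀ X : Set Ω, (nuA E ω) X
        = ENNReal.ofReal t * (bornMeasure E ((((t)⁻¹ : ℝ) : ℂ) • ω)) X := by
      intro X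
      rw [nuA]
      rfl
    constructor
    · constructor
      rw [happ Set.univ]
      have := hprob.measure_univ
      rw [this, mul_one]
      exact ENNReal.ofReal_lt_top
    · intro X hX
      rw [happ X, ENNReal.toReal_mul, ENNReal.toReal_ofReal hpos.le, hform X hX,
        trace_comp_real_smul_re]
      field_simp

lemma measure_ext_of_toReal {ν ν' : Measure Ω} (hfin : IsFiniteMeasure ν)
    (hfin' : IsFiniteMeasure ν')
    (h : ∀ X : Set Ω, MeasurableSet X → (ν X).toReal = (ν' X).toReal) : ν = ν' := by
  refine Measure.ext fun s hs => ?_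
  exact (ENNReal.toReal_eq_toReal_iff' (measure_ne_top ν s) (measure_ne_top ν' s)).1 (h s hs)

lemma nuA_char (hE : IsPOVM E) {ω : HR →L[ℂ] HR} (hω : IsPositiveTraceClass ω)
    {ν : Measure Ω} (hfin : IsFiniteMeasure ν)
    (h : ∀ X : Set Ω, MeasurableSet X → (ν X).toReal = (trace (ω ∘L E X)).re) :
    ν = nuA E ω := by
  obtain ⟨hfin', hform⟩ := nuA_spec hE hω
  exact measure_ext_of_toReal hfin hfin' fun X hX => by rw [h X hX, hform X hX]

lemma nuA_fin (hE : IsPOVM E) {ω : HR →L[ℂ] HR} (hω : IsPositiveTraceClass ω) :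
    IsFiniteMeasure (nuA E ω) := (nuA_spec hE hω).1

lemma nuA_add (hE : IsPOVM E) {ω ω' : HR →L[ℂ] HR} (hω : IsPositiveTraceClass ω)
    (hω' : IsPositiveTraceClass ω') :
    nuA E (ω + ω') = nuA E ω + nuA E ω' := by
  haveI h1 := nuA_fin hE hω
  haveI h2 := nuA_fin hE hω'
  symm
  refine nuA_char hE (posTC_add hω hω') ?_ ?_
  · constructor
    rw [Measure.add_apply]
    exact ENNReal.add_lt_top.mpr ⟨measure_lt_top _ _, measure_lt_top _ _⟩
  · intro X hX
    rw [Measure.add_apply,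
      ENNReal.toReal_add (measure_ne_top (nuA E ω) X) (measure_ne_top (nuA E ω') X),
      (nuA_spec hE hω).2 X hX, (nuA_spec hE hω').2 X hX,
      trace_comp_add_left (tc_of_pos hω) (tc_of_pos hω'), Complex.add_re]

lemma nuA_state (hE : IsPOVM E) {ω : HR →L[ℂ] HR} (hω : IsState ω) :
    nuA E ω = bornMeasure E ω := by
  symm
  obtain ⟨hprob, hform⟩ := bornMeasure_spec hE hω
  haveI := hprob
  exact nuA_char hE hω.1 inferInstance hform

lemma nuA_smul (hE : IsPOVM E) {ω : HR →L[ℂ] HR} (hω : IsPositiveTraceClass ω)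
    {t : ℝ} (ht : 0 ≤ t) :
    nuA E ((t : ℂ) • ω) = ENNReal.ofReal t • nuA E ω := by
  symm
  have hfin := nuA_fin hE hω
  refine nuA_char hE (posTC_real_smul hω ht) ?_ ?_
  · constructor
    rw [Measure.smul_apply, smul_eq_mul]
    exact ENNReal.mul_lt_top ENNReal.ofReal_lt_top (measure_lt_top _ _)
  · intro X hX
    rw [Measure.smul_apply, smul_eq_mul, ENNReal.toReal_mul, ENNReal.toReal_ofReal ht,
      (nuA_spec hE hω).2 X hX, trace_comp_real_smul_re]

end QRFAux4

namespace QRFAux5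
open QRF QRFAux QRFAux2 QRFAux3 QRFAux4 MeasureTheory

variable {Ω : Type*} [TopologicalSpace Ω] [MeasurableSpace Ω] [BorelSpace Ω]
variable {HS : Type*} [NormedAddCommGroup HS] [InnerProductSpace ℂ HS] [CompleteSpace HS]
variable {HR : Type*} [NormedAddCommGroup HR] [InnerProductSpace ℂ HR] [CompleteSpace HR]

/-- The bilinear-pairing integrand integral. -/
def P (f : Ω → HS →L[ℂ] HS) (E : Set Ω → (HR →L[ℂ] HR))
    (ρ : HS →L[ℂ] HS) (ω : HR →L[ℂ] HR) : ℂ :=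
  ∫ x, trace (ρ ∘L f x) ∂(nuA E ω)

variable {f : Ω → HS →L[ℂ] HS} {E : Set Ω → (HR →L[ℂ] HR)}

lemma integrable_g (hf : UWContinuousBounded f) {ρ : HS →L[ℂ] HS} (hρ : IsTraceClass ρ)
    (ν : Measure Ω) (hfin : IsFiniteMeasure ν) :
    Integrable (fun x => trace (ρ ∘L f x)) ν := by
  haveI := hfin
  obtain ⟨K, hK0, hK⟩ := tc_bound hρ
  obtain ⟨C, hC⟩ := hf.2
  have hcont := hf.1 ρ hρ
  refine Integrable.mono' (integrable_const (K * C)) hcont.aestronglyMeasurable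
    (Filter.Eventually.of_forall fun x => ?_)
  calc ‖trace (ρ ∘L f x)‖ ≤ K * ‖f x‖ := hK (f x)
    _ ≤ K * C := mul_le_mul_of_nonneg_left (hC x) hK0

lemma P_add_right (hE : IsPOVM E) (hf : UWContinuousBounded f)
    {ρ : HS →L[ℂ] HS} (hρ : IsTraceClass ρ) {ω ω' : HR →L[ℂ] HR}
    (hω : IsPositiveTraceClass ω) (hω' : IsPositiveTraceClass ω') :
    P f E ρ (ω + ω') = P f E ρ ω + P f E ρ ω' := by
  rw [P, P, P, nuA_add hE hω hω',
    integral_add_measure (integrable_g hf hρ _ (nuA_fin hE hω))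
      (integrable_g hf hρ _ (nuA_fin hE hω'))]

lemma P_smul_right (hE : IsPOVM E) {ρ : HS →L[ℂ] HS} {ω : HR →L[ℂ] HR}
    (hω : IsPositiveTraceClass ω) {t : ℝ} (ht : 0 ≤ t) :
    P f E ρ ((t : ℂ) • ω) = (t : ℂ) * P f E ρ ω := by
  rw [P, P, nuA_smul hE hω ht, integral_smul_measure, ENNReal.toReal_ofReal ht]
  rw [Complex.real_smul]

lemma P_add_left (hE : IsPOVM E) (hf : UWContinuousBounded f)
    {ρ ρ' : HS →L[ℂ] HS} (hρ : IsTraceClass ρ) (hρ' : IsTraceClass ρ')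
    {ω : HR →L[ℂ] HR} (hω : IsPositiveTraceClass ω) :
    P f E (ρ + ρ') ω = P f E ρ ω + P f E ρ' ω := by
  rw [P, P, P]
  have e : (fun x => trace ((ρ + ρ') ∘L f x))
      = fun x => trace (ρ ∘L f x) + trace (ρ' ∘L f x) :=
    funext fun x => trace_comp_add_left hρ hρ' (f x)
  rw [e]
  exact integral_add (integrable_g hf hρ _ (nuA_fin hE hω))
    (integrable_g hf hρ' _ (nuA_fin hE hω))

lemma P_smul_left (c : ℂ) (ρ : HS →L[ℂ] HS) (ω : HR →L[ℂ] HR) :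
    P f E (c • ρ) ω = c * P f E ρ ω := by
  rw [P, P]
  have e : (fun x => trace ((c • ρ) ∘L f x)) = fun x => c * trace (ρ ∘L f x) :=
    funext fun x => trace_comp_smul_left c ρ (f x)
  rw [e]
  exact integral_const_mul c _

lemma P_zero_left (ω : HR →L[ℂ] HR) : P f E (0 : HS →L[ℂ] HS) ω = 0 := by
  rw [P]
  have e : (fun x => trace ((0 : HS →L[ℂ] HS) ∘L f x)) = fun _ => (0 : ℂ) :=
    funext fun x => by rw [zero_comp', trace_zero]
  rw [e]
  simp

lemma nuA_zero : nuA E (0 : HR →L[ℂ] HR) = 0 := by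
  rw [nuA, trace_zero]
  simp

lemma P_zero_right (ρ : HS →L[ℂ] HS) : P f E ρ (0 : HR →L[ℂ] HR) = 0 := by
  rw [P, nuA_zero]
  simp

lemma P_state (hE : IsPOVM E) {ρ : HS →L[ℂ] HS} {ω : HR →L[ℂ] HR} (hω : IsState ω) :
    P f E ρ ω = ∫ x, trace (ρ ∘L f x) ∂(bornMeasure E ω) := by
  rw [P, nuA_state hE hω]

end QRFAux5

namespace QRFAux6
open QRF QRFAux QRFAux2 QRFAux3

variable {H : Type*} [NormedAddCommGroup H] [InnerProductSpace ℂ H] [CompleteSpace H]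

lemma I_smul_selfAdjoint_eq_zero {M : H →L[ℂ] H} (hM : IsSelfAdjoint M)
    (h : IsSelfAdjoint (Complex.I • M)) : M = 0 := by
  have h1 : star (Complex.I • M) = Complex.I • M := h
  rw [star_smul, hM.star_eq] at h1
  have h2 : (starRingEnd ℂ) Complex.I = -Complex.I := Complex.conj_I
  rw [show (star Complex.I : ℂ) = -Complex.I from Complex.conj_I] at h1
  rw [show (-Complex.I) • M = -(Complex.I • M) from neg_smul _ _] at h1
  have h3 : (Complex.I + Complex.I) • M = 0 := by
    rw [add_smul]
    nth_rewrite 1 [← h1]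
    abel
  have h4 : (Complex.I + Complex.I) ≠ 0 := by
    simp [Complex.ext_iff]
  rcases smul_eq_zero.mp h3 with h | h
  · exact absurd h h4
  · exact h

lemma decomp_parts_eq {A B C D A' B' C' D' : H →L[ℂ] H}
    (hA : IsSelfAdjoint A) (hB : IsSelfAdjoint B) (hC : IsSelfAdjoint C)
    (hD : IsSelfAdjoint D) (hA' : IsSelfAdjoint A') (hB' : IsSelfAdjoint B')
    (hC' : IsSelfAdjoint C') (hD' : IsSelfAdjoint D')
    (h : A - B + Complex.I • (C - D) = A' - B' + Complex.I • (C' - D')) :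
    A - B = A' - B' ∧ C - D = C' - D' := by
  have hM : IsSelfAdjoint ((C' - D') - (C - D)) := (hC'.sub hD').sub (hC.sub hD)
  have h1 : (A - B) - (A' - B') = Complex.I • ((C' - D') - (C - D)) := by
    rw [smul_sub]
    have := sub_eq_sub_iff_add_eq_add.mpr h
    -- rearrange
    have h2 : A - B - (A' - B') = Complex.I • (C' - D') - Complex.I • (C - D) := by
      have := h
      apply sub_eq_sub_iff_add_eq_add.mpr
      rw [add_comm (A - B) _] at this ⊢
      linear_combination (norm := abel) this
    exact h2
  have hsa : IsSelfAdjoint (Complex.I • ((C' - D') - (C - D))) := by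
    rw [← h1]
    exact (hA.sub hB).sub (hA'.sub hB')
  have hM0 : (C' - D') - (C - D) = 0 := I_smul_selfAdjoint_eq_zero hM hsa
  have hCD : C - D = C' - D' := by
    have := sub_eq_zero.mp hM0
    exact this.symm
  constructor
  · rw [hCD] at h
    exact add_right_cancel h
  · exact hCD

end QRFAux6

namespace QRFAux7
open QRF QRFAux QRFAux2 QRFAux3 QRFAux4 QRFAux5 QRFAux6 MeasureTheory

variable {Ω : Type*} [TopologicalSpace Ω] [MeasurableSpace Ω] [BorelSpace Ω]
variable {HS : Type*} [NormedAddCommGroup HS] [InnerProductSpace ℂ HS] [CompleteSpace HS]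
variable {HR : Type*} [NormedAddCommGroup HR] [InnerProductSpace ℂ HR] [CompleteSpace HR]
variable {f : Ω → HS →L[ℂ] HS} {E : Set Ω → (HR →L[ℂ] HR)}

lemma P_welldef (hE : IsPOVM E) (hf : UWContinuousBounded f)
    {ρ : HS →L[ℂ] HS} (hρ : IsTraceClass ρ)
    {A B C D A' B' C' D' : HR →L[ℂ] HR}
    (hA : IsPositiveTraceClass A) (hB : IsPositiveTraceClass B)
    (hC : IsPositiveTraceClass C) (hD : IsPositiveTraceClass D)
    (hA' : IsPositiveTraceClass A') (hB' : IsPositiveTraceClass B')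
    (hC' : IsPositiveTraceClass C') (hD' : IsPositiveTraceClass D')
    (h : A - B + Complex.I • (C - D) = A' - B' + Complex.I • (C' - D')) :
    P f E ρ A - P f E ρ B + Complex.I * (P f E ρ C - P f E ρ D)
      = P f E ρ A' - P f E ρ B' + Complex.I * (P f E ρ C' - P f E ρ D') := by
  obtain ⟨hAB, hCD⟩ := decomp_parts_eq hA.1.isSelfAdjoint hB.1.isSelfAdjoint
    hC.1.isSelfAdjoint hD.1.isSelfAdjoint hA'.1.isSelfAdjoint hB'.1.isSelfAdjoint
    hC'.1.isSelfAdjoint hD'.1.isSelfAdjoint h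
  have e1 : A + B' = A' + B := sub_eq_sub_iff_add_eq_add.mp hAB
  have e2 : C + D' = C' + D := sub_eq_sub_iff_add_eq_add.mp hCD
  have p1 : P f E ρ A + P f E ρ B' = P f E ρ A' + P f E ρ B := by
    rw [← P_add_right hE hf hρ hA hB', ← P_add_right hE hf hρ hA' hB, e1]
  have p2 : P f E ρ C + P f E ρ D' = P f E ρ C' + P f E ρ D := by
    rw [← P_add_right hE hf hρ hC hD', ← P_add_right hE hf hρ hC' hD, e2]
  linear_combination p1 + Complex.I * p2

open Classical in
/-- The extended bilinear functional. -/
def betaF (f : Ω → HS →L[ℂ] HS) (E : Set Ω → (HR →L[ℂ] HR))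
    (ρ : HS →L[ℂ] HS) (ω : HR →L[ℂ] HR) : ℂ :=
  if h : IsTraceClass ω then
    P f E ρ h.choose - P f E ρ h.choose_spec.choose
      + Complex.I * (P f E ρ h.choose_spec.choose_spec.choose
        - P f E ρ h.choose_spec.choose_spec.choose_spec.choose)
  else 0

lemma betaF_spec (hE : IsPOVM E) (hf : UWContinuousBounded f)
    {ρ : HS →L[ℂ] HS} (hρ : IsTraceClass ρ) {ω A B C D : HR →L[ℂ] HR}
    (hA : IsPositiveTraceClass A) (hB : IsPositiveTraceClass B)
    (hC : IsPositiveTraceClass C) (hD : IsPositiveTraceClass D)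
    (hrep : ω = A - B + Complex.I • (C - D)) :
    betaF f E ρ ω = P f E ρ A - P f E ρ B
      + Complex.I * (P f E ρ C - P f E ρ D) := by
  have h : IsTraceClass ω := ⟨A, B, C, D, hA, hB, hC, hD, hrep⟩
  rw [betaF, dif_pos h]
  obtain ⟨hA0, hB0, hC0, hD0, hrep0⟩ :=
    h.choose_spec.choose_spec.choose_spec.choose_spec
  exact P_welldef hE hf hρ hA0 hB0 hC0 hD0 hA hB hC hD (hrep0.symm.trans hrep)

lemma betaF_eq_P (hE : IsPOVM E) (hf : UWContinuousBounded f)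
    {ρ : HS →L[ℂ] HS} (hρ : IsTraceClass ρ) {ω : HR →L[ℂ] HR}
    (hω : IsPositiveTraceClass ω) : betaF f E ρ ω = P f E ρ ω := by
  rw [betaF_spec hE hf hρ hω posTC_zero posTC_zero posTC_zero (by simp),
    P_zero_right]
  ring

lemma betaF_add_left (hE : IsPOVM E) (hf : UWContinuousBounded f)
    {ρ ρ' : HS →L[ℂ] HS} (hρ : IsTraceClass ρ) (hρ' : IsTraceClass ρ')
    {ω : HR →L[ℂ] HR} (hω : IsTraceClass ω) :
    betaF f E (ρ + ρ') ω = betaF f E ρ ω + betaF f E ρ' ω := by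
  obtain ⟨A, B, C, D, hA, hB, hC, hD, hrep⟩ := hω
  rw [betaF_spec hE hf (tc_add hρ hρ') hA hB hC hD hrep,
    betaF_spec hE hf hρ hA hB hC hD hrep, betaF_spec hE hf hρ' hA hB hC hD hrep,
    P_add_left hE hf hρ hρ' hA, P_add_left hE hf hρ hρ' hB,
    P_add_left hE hf hρ hρ' hC, P_add_left hE hf hρ hρ' hD]
  ring

lemma betaF_smul_left (hE : IsPOVM E) (hf : UWContinuousBounded f)
    (c : ℂ) {ρ : HS →L[ℂ] HS} (hρ : IsTraceClass ρ)
    {ω : HR →L[ℂ] HR} (hω : IsTraceClass ω) :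
    betaF f E (c • ρ) ω = c * betaF f E ρ ω := by
  obtain ⟨A, B, C, D, hA, hB, hC, hD, hrep⟩ := hω
  rw [betaF_spec hE hf (tc_smul hρ c) hA hB hC hD hrep,
    betaF_spec hE hf hρ hA hB hC hD hrep,
    P_smul_left, P_smul_left, P_smul_left, P_smul_left]
  ring

lemma betaF_add_right (hE : IsPOVM E) (hf : UWContinuousBounded f)
    {ρ : HS →L[ℂ] HS} (hρ : IsTraceClass ρ) {ω ω' : HR →L[ℂ] HR}
    (hω : IsTraceClass ω) (hω' : IsTraceClass ω') :
    betaF f E ρ (ω + ω') = betaF f E ρ ω + betaF f E ρ ω' := by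
  obtain ⟨A, B, C, D, hA, hB, hC, hD, hrep⟩ := hω
  obtain ⟨A', B', C', D', hA', hB', hC', hD', hrep'⟩ := hω'
  have hrepsum : ω + ω' = (A + A') - (B + B')
      + Complex.I • ((C + C') - (D + D')) := by
    rw [hrep, hrep', smul_sub, smul_sub, smul_sub, smul_add, smul_add]
    abel
  rw [betaF_spec hE hf hρ (posTC_add hA hA') (posTC_add hB hB')
      (posTC_add hC hC') (posTC_add hD hD') hrepsum,
    betaF_spec hE hf hρ hA hB hC hD hrep,
    betaF_spec hE hf hρ hA' hB' hC' hD' hrep',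
    P_add_right hE hf hρ hA hA', P_add_right hE hf hρ hB hB',
    P_add_right hE hf hρ hC hC', P_add_right hE hf hρ hD hD']
  ring

lemma betaF_neg_right (hE : IsPOVM E) (hf : UWContinuousBounded f)
    {ρ : HS →L[ℂ] HS} (hρ : IsTraceClass ρ) {ω : HR →L[ℂ] HR}
    (hω : IsTraceClass ω) :
    betaF f E ρ (-ω) = -betaF f E ρ ω := by
  obtain ⟨A, B, C, D, hA, hB, hC, hD, hrep⟩ := hω
  have hrepneg : -ω = B - A + Complex.I • (D - C) := by
    rw [hrep, smul_sub, smul_sub]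
    abel
  rw [betaF_spec hE hf hρ hB hA hD hC hrepneg,
    betaF_spec hE hf hρ hA hB hC hD hrep]
  ring

lemma betaF_I_smul_right (hE : IsPOVM E) (hf : UWContinuousBounded f)
    {ρ : HS →L[ℂ] HS} (hρ : IsTraceClass ρ) {ω : HR →L[ℂ] HR}
    (hω : IsTraceClass ω) :
    betaF f E ρ (Complex.I • ω) = Complex.I * betaF f E ρ ω := by
  obtain ⟨A, B, C, D, hA, hB, hC, hD, hrep⟩ := hω
  have hrepI : Complex.I • ω = D - C + Complex.I • (A - B) := by
    rw [hrep, smul_add, smul_smul, Complex.I_mul_I, neg_smul, one_smul, smul_sub]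
    abel
  rw [betaF_spec hE hf hρ hD hC hA hB hrepI,
    betaF_spec hE hf hρ hA hB hC hD hrep]
  linear_combination (P f E ρ D - P f E ρ C) * Complex.I_sq

lemma betaF_real_smul_right_nonneg (hE : IsPOVM E) (hf : UWContinuousBounded f)
    {ρ : HS →L[ℂ] HS} (hρ : IsTraceClass ρ) {ω : HR →L[ℂ] HR}
    (hω : IsTraceClass ω) {t : ℝ} (ht : 0 ≤ t) :
    betaF f E ρ ((t : ℂ) • ω) = (t : ℂ) * betaF f E ρ ω := by
  obtain ⟨A, B, C, D, hA, hB, hC, hD, hrep⟩ := hω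
  have hrept : (t : ℂ) • ω = (t : ℂ) • A - (t : ℂ) • B
      + Complex.I • ((t : ℂ) • C - (t : ℂ) • D) := by
    rw [hrep, smul_add, smul_sub, smul_sub, smul_sub,
      smul_comm ((t : ℂ)) Complex.I C, smul_comm ((t : ℂ)) Complex.I D,
      ← smul_sub Complex.I]
  rw [betaF_spec hE hf hρ (posTC_real_smul hA ht) (posTC_real_smul hB ht)
      (posTC_real_smul hC ht) (posTC_real_smul hD ht) hrept,
    betaF_spec hE hf hρ hA hB hC hD hrep,
    P_smul_right hE hA ht, P_smul_right hE hB ht,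
    P_smul_right hE hC ht, P_smul_right hE hD ht]
  ring

lemma betaF_real_smul_right (hE : IsPOVM E) (hf : UWContinuousBounded f)
    {ρ : HS →L[ℂ] HS} (hρ : IsTraceClass ρ) {ω : HR →L[ℂ] HR}
    (hω : IsTraceClass ω) (t : ℝ) :
    betaF f E ρ ((t : ℂ) • ω) = (t : ℂ) * betaF f E ρ ω := by
  rcases le_or_gt 0 t with ht | ht
  · exact betaF_real_smul_right_nonneg hE hf hρ hω ht
  · have h1 : (t : ℂ) • ω = -((((-t : ℝ)) : ℂ) • ω) := by
      push_cast
      rw [neg_smul, neg_neg]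
    rw [h1, betaF_neg_right hE hf hρ (tc_real_smul hω (-t)),
      betaF_real_smul_right_nonneg hE hf hρ hω (by linarith : (0:ℝ) ≤ -t)]
    push_cast
    ring

lemma betaF_smul_right (hE : IsPOVM E) (hf : UWContinuousBounded f)
    (c : ℂ) {ρ : HS →L[ℂ] HS} (hρ : IsTraceClass ρ) {ω : HR →L[ℂ] HR}
    (hω : IsTraceClass ω) :
    betaF f E ρ (c • ω) = c * betaF f E ρ ω := by
  have h1 : c • ω = (c.re : ℂ) • ω + (c.im : ℂ) • (Complex.I • ω) := by
    rw [smul_smul, ← add_smul, Complex.re_add_im]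
  rw [h1, betaF_add_right hE hf hρ (tc_real_smul hω c.re)
      (tc_real_smul (tc_I_smul hω) c.im),
    betaF_real_smul_right hE hf hρ hω c.re,
    betaF_real_smul_right hE hf hρ (tc_I_smul hω) c.im,
    betaF_I_smul_right hE hf hρ hω]
  linear_combination (betaF f E ρ ω) * (Complex.re_add_im c)

end QRFAux7

namespace QRFAux8
open QRF QRFAux QRFAux2 QRFAux3 QRFAux4 QRFAux5 QRFAux6 QRFAux7 MeasureTheory

variable {Ω : Type*} [TopologicalSpace Ω] [MeasurableSpace Ω] [BorelSpace Ω]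
variable {HS : Type*} [NormedAddCommGroup HS] [InnerProductSpace ℂ HS] [CompleteSpace HS]
variable {HR : Type*} [NormedAddCommGroup HR] [InnerProductSpace ℂ HR] [CompleteSpace HR]
variable {f : Ω → HS →L[ℂ] HS} {E : Set Ω → (HR →L[ℂ] HR)}

lemma betaF_state (hE : IsPOVM E) (hf : UWContinuousBounded f)
    {ρ : HS →L[ℂ] HS} (hρ : IsTraceClass ρ) {ω : HR →L[ℂ] HR} (hω : IsState ω) :
    betaF f E ρ ω = ∫ x, trace (ρ ∘L f x) ∂(bornMeasure E ω) := by
  rw [betaF_eq_P hE hf hρ hω.1, P_state hE hω]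

lemma betaF_bound (hE : IsPOVM E) (hf : UWContinuousBounded f)
    {ρ : HS →L[ℂ] HS} {ω : HR →L[ℂ] HR} (hρ : IsState ρ) (hω : IsState ω) :
    ‖betaF f E ρ ω‖ ≤ ⨆ x, ‖f x‖ := by
  rw [betaF_state hE hf (tc_of_pos hρ.1) hω]
  obtain ⟨hprob, _⟩ := bornMeasure_spec hE hω
  haveI := hprob
  obtain ⟨C, hC⟩ := hf.2
  have hbdd : BddAbove (Set.range fun x => ‖f x‖) :=
    ⟨C, by rintro y ⟨x, rfl⟩; exact hC x⟩
  have htr1 : (trace ρ).re = 1 := by rw [hρ.2]; simp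
  have hbound : ∀ x, ‖trace (ρ ∘L f x)‖ ≤ ⨆ x, ‖f x‖ := fun x => by
    calc ‖trace (ρ ∘L f x)‖ ≤ (trace ρ).re * ‖f x‖ := (posTC_comp hρ.1 (f x)).2
      _ = ‖f x‖ := by rw [htr1, one_mul]
      _ ≤ ⨆ x, ‖f x‖ := le_ciSup hbdd x
  calc ‖∫ x, trace (ρ ∘L f x) ∂(bornMeasure E ω)‖
      ≤ (⨆ x, ‖f x‖) * ((bornMeasure E ω) Set.univ).toReal :=
        norm_integral_le_of_norm_le_const (Filter.Eventually.of_forall hbound)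
    _ = ⨆ x, ‖f x‖ := by rw [hprob.measure_univ]; simp

lemma betaF_unique (hE : IsPOVM E) (hf : UWContinuousBounded f)
    (β' : (HS →L[ℂ] HS) → (HR →L[ℂ] HR) → ℂ)
    (hbil : BilinearOnTraceClass β')
    (hagree : ∀ ρ ω, IsState ρ → IsState ω →
      β' ρ ω = ∫ x, trace (ρ ∘L f x) ∂(bornMeasure E ω)) :
    ∀ ρ ω, IsTraceClass ρ → IsTraceClass ω → β' ρ ω = betaF f E ρ ω := by
  obtain ⟨hadd1, hsmul1, hadd2, hsmul2⟩ := hbil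
  have s0r : ∀ ρ : HS →L[ℂ] HS, IsTraceClass ρ → β' ρ 0 = 0 := by
    intro ρ hρ
    have h := hsmul2 0 ρ 0 hρ tc_zero
    rw [zero_smul] at h
    rw [h, zero_mul]
  have s0l : ∀ ω : HR →L[ℂ] HR, IsTraceClass ω → β' 0 ω = 0 := by
    intro ω hω
    have h := hsmul1 0 0 ω tc_zero hω
    rw [zero_smul] at h
    rw [h, zero_mul]
  have step1 : ∀ (ρ : HS →L[ℂ] HS) (ω : HR →L[ℂ] HR), IsState ρ → IsState ω →
      β' ρ ω = P f E ρ ω := by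
    intro ρ ω hρ hω
    rw [hagree ρ ω hρ hω, P_state hE hω]
  have step1' : ∀ (A : HS →L[ℂ] HS) (ω : HR →L[ℂ] HR),
      IsPositiveTraceClass A → IsState ω → β' A ω = P f E A ω := by
    intro A ω hA hω
    by_cases hz : A = 0
    · subst hz
      rw [s0l _ (tc_of_pos hω.1), P_zero_left]
    · obtain ⟨hpos, hstate⟩ := state_normalize hA hz
      have hAeq : A = ((trace A).re : ℂ) • (((((trace A).re)⁻¹ : ℝ) : ℂ) • A) := by
        rw [smul_smul, ← Complex.ofReal_mul, mul_inv_cancel₀ hpos.ne',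
          Complex.ofReal_one, one_smul]
      calc β' A ω = β' (((trace A).re : ℂ) • (((((trace A).re)⁻¹ : ℝ) : ℂ) • A)) ω := by
            rw [← hAeq]
        _ = ((trace A).re : ℂ) * β' ((((((trace A).re)⁻¹ : ℝ) : ℂ)) • A) ω :=
            hsmul1 _ _ _ (tc_of_pos hstate.1) (tc_of_pos hω.1)
        _ = ((trace A).re : ℂ) * P f E ((((((trace A).re)⁻¹ : ℝ) : ℂ)) • A) ω := by
            rw [step1 _ _ hstate hω]
        _ = P f E (((trace A).re : ℂ) • (((((trace A).re)⁻¹ : ℝ) : ℂ) • A)) ω :=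
            (P_smul_left _ _ _).symm
        _ = P f E A ω := by rw [← hAeq]
  have step2 : ∀ (ρ : HS →L[ℂ] HS) (ω : HR →L[ℂ] HR),
      IsTraceClass ρ → IsState ω → β' ρ ω = P f E ρ ω := by
    intro ρ ω hρ hω
    obtain ⟨A, B, C, D, hA, hB, hC, hD, hrep⟩ := hρ
    have tA := tc_of_pos hA
    have tB := tc_smul (tc_of_pos hB) (-1 : ℂ)
    have tC := tc_smul (tc_of_pos hC) Complex.I
    have tD := tc_smul (tc_of_pos hD) (-Complex.I)
    have t1 : IsTraceClass (A + (-1 : ℂ) • B) := tc_add tA tB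
    have t2 : IsTraceClass (Complex.I • C + (-Complex.I) • D) := tc_add tC tD
    have hωt := tc_of_pos hω.1
    have hrep2 : ρ = (A + (-1 : ℂ) • B) + (Complex.I • C + (-Complex.I) • D) := by
      rw [hrep, neg_smul, one_smul, neg_smul, smul_sub]
      abel
    have hβexp : β' ρ ω = β' A ω - β' B ω + Complex.I * (β' C ω - β' D ω) := by
      rw [hrep2, hadd1 _ _ _ t1 t2 hωt, hadd1 _ _ _ tA tB hωt, hadd1 _ _ _ tC tD hωt,
        hsmul1 _ _ _ (tc_of_pos hB) hωt, hsmul1 _ _ _ (tc_of_pos hC) hωt,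
        hsmul1 _ _ _ (tc_of_pos hD) hωt]
      ring
    have hPexp : P f E ρ ω = P f E A ω - P f E B ω
        + Complex.I * (P f E C ω - P f E D ω) := by
      rw [hrep2, P_add_left hE hf t1 t2 hω.1, P_add_left hE hf tA tB hω.1,
        P_add_left hE hf tC tD hω.1, P_smul_left, P_smul_left, P_smul_left]
      ring
    rw [hβexp, hPexp, step1' A ω hA hω, step1' B ω hB hω, step1' C ω hC hω,
      step1' D ω hD hω]
  have step3 : ∀ (ρ : HS →L[ℂ] HS) (A : HR →L[ℂ] HR),
      IsTraceClass ρ → IsPositiveTraceClass A → β' ρ A = P f E ρ A := by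
    intro ρ A hρ hA
    by_cases hz : A = 0
    · subst hz
      rw [s0r _ hρ, P_zero_right]
    · obtain ⟨hpos, hstate⟩ := state_normalize hA hz
      have hAeq : A = ((trace A).re : ℂ) • (((((trace A).re)⁻¹ : ℝ) : ℂ) • A) := by
        rw [smul_smul, ← Complex.ofReal_mul, mul_inv_cancel₀ hpos.ne',
          Complex.ofReal_one, one_smul]
      calc β' ρ A = β' ρ (((trace A).re : ℂ) • (((((trace A).re)⁻¹ : ℝ) : ℂ) • A)) := by
            rw [← hAeq]
        _ = ((trace A).re : ℂ) * β' ρ ((((((trace A).re)⁻¹ : ℝ) : ℂ)) • A) :=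
            hsmul2 _ _ _ hρ (tc_of_pos hstate.1)
        _ = ((trace A).re : ℂ) * P f E ρ ((((((trace A).re)⁻¹ : ℝ) : ℂ)) • A) := by
            rw [step2 _ _ hρ hstate]
        _ = P f E ρ (((trace A).re : ℂ) • (((((trace A).re)⁻¹ : ℝ) : ℂ) • A)) :=
            (P_smul_right hE hstate.1 (trace_posTC_re_nonneg hA)).symm
        _ = P f E ρ A := by rw [← hAeq]
  intro ρ ω hρ hω
  obtain ⟨A, B, C, D, hA, hB, hC, hD, hrep⟩ := hω
  have tA := tc_of_pos hA
  have tB := tc_smul (tc_of_pos hB) (-1 : ℂ)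
  have tC := tc_smul (tc_of_pos hC) Complex.I
  have tD := tc_smul (tc_of_pos hD) (-Complex.I)
  have t1 : IsTraceClass (A + (-1 : ℂ) • B) := tc_add tA tB
  have t2 : IsTraceClass (Complex.I • C + (-Complex.I) • D) := tc_add tC tD
  have hrep2 : ω = (A + (-1 : ℂ) • B) + (Complex.I • C + (-Complex.I) • D) := by
    rw [hrep, neg_smul, one_smul, neg_smul, smul_sub]
    abel
  have hβexp : β' ρ ω = β' ρ A - β' ρ B + Complex.I * (β' ρ C - β' ρ D) := by
    rw [hrep2, hadd2 _ _ _ hρ t1 t2, hadd2 _ _ _ hρ tA tB, hadd2 _ _ _ hρ tC tD,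
      hsmul2 _ _ _ hρ (tc_of_pos hB), hsmul2 _ _ _ hρ (tc_of_pos hC),
      hsmul2 _ _ _ hρ (tc_of_pos hD)]
    ring
  rw [hβexp, betaF_spec hE hf hρ hA hB hC hD hrep, step3 ρ A hρ hA, step3 ρ B hρ hB,
    step3 ρ C hρ hC, step3 ρ D hρ hD]

end QRFAux8

/-- The pairing `(ρ, ω) ↦ ∫_Σ tr(ρ f(x)) dμ^E_ω(x)` on states extends uniquely to a bounded
bilinear functional on trace-class operators, with values on states bounded by `sup ‖f‖`. -/
theorem statement3 {Ω HS HR : Type*}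
    [TopologicalSpace Ω] [MeasurableSpace Ω] [BorelSpace Ω]
    [NormedAddCommGroup HS] [InnerProductSpace ℂ HS] [CompleteSpace HS]
    [NormedAddCommGroup HR] [InnerProductSpace ℂ HR] [CompleteSpace HR]
    (f : Ω → HS →L[ℂ] HS) (hf : UWContinuousBounded f)
    (E : Set Ω → (HR →L[ℂ] HR)) (hE : IsPOVM E) :
    ∃ β : (HS →L[ℂ] HS) → (HR →L[ℂ] HR) → ℂ,
      BilinearOnTraceClass β ∧
      (∀ ρ ω, IsState ρ → IsState ω →
        β ρ ω = ∫ x, trace (ρ ∘L f x) ∂(bornMeasure E ω)) ∧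
      (∀ ρ ω, IsState ρ → IsState ω → ‖β ρ ω‖ ≤ ⨆ x, ‖f x‖) ∧
      ∀ β' : (HS →L[ℂ] HS) → (HR →L[ℂ] HR) → ℂ,
        BilinearOnTraceClass β' →
        (∀ ρ ω, IsState ρ → IsState ω →
          β' ρ ω = ∫ x, trace (ρ ∘L f x) ∂(bornMeasure E ω)) →
        ∀ ρ ω, IsTraceClass ρ → IsTraceClass ω → β' ρ ω = β ρ ω := by
  refine ⟨QRFAux7.betaF f E, ⟨?_, ?_, ?_, ?_⟩, ?_, ?_, ?_⟩
  · intro ρ ρ' ω hρ hρ' hω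
    exact QRFAux7.betaF_add_left hE hf hρ hρ' hω
  · intro c ρ ω hρ hω
    exact QRFAux7.betaF_smul_left hE hf c hρ hω
  · intro ρ ω ω' hρ hω hω'
    exact QRFAux7.betaF_add_right hE hf hρ hω hω'
  · intro c ρ ω hρ hω
    exact QRFAux7.betaF_smul_right hE hf c hρ hω
  · intro ρ ω hρ hω
    exact QRFAux8.betaF_state hE hf (QRFAux3.tc_of_pos hρ.1) hω
  · intro ρ ω hρ hω
    exact QRFAux8.betaF_bound hE hf hρ hω
  · intro β' hbil hagree ρ ω hρ hω
    exact QRFAux8.betaF_unique hE hf β' hbil hagree ρ ω hρ hω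
end
end

section
/- Let G be a locally compact second-countable Hausdorff group with strongly continuous unitary representations U_S on H_S and U_R on H_R, and let E be a right-covariant POVM on G with values in B(H_R). Then for every A ∈ B(H_S), the relativized operator ¥(A) := ∫_G A.g ⊗ dE(g) is invariant under the diagonal action of G: (U_S(h) ⊗ U_R(h))* ¥(A) (U_S(h) ⊗ U_R(h)) = ¥(A) for all h ∈ G. -/
open MeasureTheory ContinuousLinearMap
open scoped ENNReal

noncomputable section

open QRF

section Aux

variable {H : Type*} [NormedAddCommGroup H] [InnerProductSpace ℂ H] [CompleteSpace H]

/-- Rank-one operator `x ↦ ⟪u, x⟫ u`. -/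
noncomputable def rk1 (u : H) : H →L[ℂ] H := (innerSL ℂ u).smulRight u

lemma rk1_apply (u x : H) : rk1 u x = (inner ℂ u x : ℂ) • u := rfl

lemma trace_rk1_comp (u : H) (T : H →L[ℂ] H) :
    trace (rk1 u ∘L T) = (inner ℂ u (T u) : ℂ) := by
  have key : ∀ i : hbIdx H, (inner ℂ ((hb H) i) ((rk1 u ∘L T) ((hb H) i)) : ℂ)
      = (inner ℂ (adjoint T u) ((hb H) i : H) : ℂ) * (inner ℂ ((hb H) i : H) u : ℂ) := by
    intro i
    rw [ContinuousLinearMap.comp_apply, rk1_apply, inner_smul_right,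
      ContinuousLinearMap.adjoint_inner_left]
  rw [trace]
  simp only [key]
  rw [HilbertBasis.tsum_inner_mul_inner, ContinuousLinearMap.adjoint_inner_left]

lemma isState_rk1 (u : H) (hu : ‖u‖ = 1) : IsState (rk1 u) := by
  have hsa : IsSelfAdjoint (rk1 u) := by
    rw [ContinuousLinearMap.isSelfAdjoint_iff']
    symm
    rw [ContinuousLinearMap.eq_adjoint_iff]
    intro x y
    rw [rk1_apply, rk1_apply, inner_smul_left, inner_smul_right, ← inner_conj_symm u x,
      Complex.conj_conj]
    ring
  refine ⟨⟨⟨ContinuousLinearMap.isSelfAdjoint_iff_isSymmetric.mp hsa, ?_⟩, ?_⟩, ?_⟩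
  · intro x
    have : (rk1 u).reApplyInnerSelf x = ‖(inner ℂ u x : ℂ)‖ ^ 2 := by
      rw [ContinuousLinearMap.reApplyInnerSelf, rk1_apply, inner_smul_left,
        RCLike.conj_mul, ← RCLike.ofReal_pow, RCLike.ofReal_re]
    rw [this]; positivity
  · have hsum := ((hb H).hasSum_inner_mul_inner u u).summable
    have := (Complex.hasSum_re ((hb H).hasSum_inner_mul_inner u u)).summable
    refine this.congr fun i => ?_
    congr 1
    rw [rk1_apply, inner_smul_right]
  · have h := trace_rk1_comp u 1
    rw [ContinuousLinearMap.one_def, ContinuousLinearMap.comp_id,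
      ContinuousLinearMap.id_apply, inner_self_eq_norm_sq_to_K, hu] at h
    rw [h]; norm_num

variable {HS HR HT : Type*}
  [NormedAddCommGroup HS] [InnerProductSpace ℂ HS] [CompleteSpace HS]
  [NormedAddCommGroup HR] [InnerProductSpace ℂ HR] [CompleteSpace HR]
  [NormedAddCommGroup HT] [InnerProductSpace ℂ HT] [CompleteSpace HT]

lemma isTensorOp_rk1 (tm : HilbertTensor HS HR HT) (u : HS) (v : HR) :
    tm.IsTensorOp (rk1 u) (rk1 v) (rk1 (tm.tmul u v)) := by
  intro a b
  rw [rk1_apply, rk1_apply, rk1_apply, tm.inner_tmul, tm.smul_left, tm.smul_right, smul_smul]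

variable {G : Type*} [Group G] [TopologicalSpace G]

lemma unitary_norm {U : G → H →L[ℂ] H} (hU : IsUnitaryRep U) (g : G) (x : H) :
    ‖U g x‖ = ‖x‖ := by
  have h1 : U g⁻¹ ∘L U g = 1 := by rw [← hU.2.1]; simp [hU.1]
  have h2 : (inner ℂ (U g x) (U g x) : ℂ) = inner ℂ x x := by
    rw [← ContinuousLinearMap.adjoint_inner_right, hU.2.2.1,
      ← ContinuousLinearMap.comp_apply, h1, ContinuousLinearMap.one_apply]
  rw [norm_eq_sqrt_re_inner (𝕜 := ℂ) (U g x), norm_eq_sqrt_re_inner (𝕜 := ℂ) x, h2]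

lemma inner_opAct {U : G → H →L[ℂ] H} (g : G) (u : H) (A : H →L[ℂ] H) :
    (inner ℂ u (opAct U g A u) : ℂ) = inner ℂ (U g u) (A (U g u)) := by
  simp only [opAct, ContinuousLinearMap.comp_apply]
  rw [ContinuousLinearMap.adjoint_inner_right]

lemma polarize {α : Type*} [AddCommGroup α] [Module ℂ α] (B : α → α → ℂ)
    (h1 : ∀ x y z, B (x + y) z = B x z + B y z)
    (h2 : ∀ x y z, B x (y + z) = B x y + B x z)
    (h3 : ∀ (c : ℂ) x y, B (c • x) y = (starRingEnd ℂ) c * B x y)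
    (h4 : ∀ (c : ℂ) x y, B x (c • y) = c * B x y)
    (h0 : ∀ x, B x x = 0) (x y : α) : B x y = 0 := by
  have e1 : B x y + B y x = 0 := by
    have Hxy := h0 (x + y)
    rw [h1, h2, h2, h0 x, h0 y] at Hxy
    linear_combination Hxy
  have e2 : B x y - B y x = 0 := by
    have Hxy := h0 (x + Complex.I • y)
    rw [h1, h2, h2, h0 x, h3, h4, h4, h3, h0 y, Complex.conj_I] at Hxy
    linear_combination (-Complex.I) * Hxy + (B x y - B y x) * Complex.I_mul_I
  linear_combination (e1 + e2) / 2

lemma bornMeasure_spec {Ω : Type*} [MeasurableSpace Ω] {E : Set Ω → (H →L[ℂ] H)}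
    (hE : IsPOVM E) {ω : H →L[ℂ] H} (hω : IsState ω) :
    IsProbabilityMeasure (bornMeasure E ω) ∧
      ∀ X : Set Ω, MeasurableSet X →
        ((bornMeasure E ω) X).toReal = (trace (ω ∘L E X)).re := by
  have hex := hE.2.2 ω hω
  rw [bornMeasure, dif_pos hex]
  exact hex.choose_spec

end Aux

/-- Invariance of relativized observables: `¥(A) = ∫_G A.g ⊗ dE(g)` is invariant under the
diagonal unitary action of `G`. -/
theorem statement7 {G HS HR HT : Type*}
    [Group G] [TopologicalSpace G] [IsTopologicalGroup G]
    [LocallyCompactSpace G] [SecondCountableTopology G] [T2Space G]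
    [MeasurableSpace G] [BorelSpace G]
    [NormedAddCommGroup HS] [InnerProductSpace ℂ HS] [CompleteSpace HS]
    [NormedAddCommGroup HR] [InnerProductSpace ℂ HR] [CompleteSpace HR]
    [NormedAddCommGroup HT] [InnerProductSpace ℂ HT] [CompleteSpace HT]
    (US : G → HS →L[ℂ] HS) (hUS : IsUnitaryRep US)
    (UR : G → HR →L[ℂ] HR) (hUR : IsUnitaryRep UR)
    (E : Set G → (HR →L[ℂ] HR)) (hE : IsPOVM E) (hcov : RightCovariant UR E)
    (tm : HilbertTensor HS HR HT)
    (A : HS →L[ℂ] HS) (Y : HT →L[ℂ] HT)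
    (hY : IsOVIntegral tm (fun g => opAct US g A) E Y)
    (h : G) (W : HT →L[ℂ] HT) (hW : tm.IsTensorOp (US h) (UR h) W) :
    adjoint W ∘L Y ∘L W = Y := by
  classical
  set D : HT →L[ℂ] HT := adjoint W ∘L Y ∘L W - Y with hDdef
  -- Step A: diagonal matrix elements on unit elementary tensors vanish
  have keyA : ∀ (u : HS) (v : HR), ‖u‖ = 1 → ‖v‖ = 1 →
      (inner ℂ (tm.tmul u v) (D (tm.tmul u v)) : ℂ) = 0 := by
    intro u v hu hv
    have hu' : ‖US h u‖ = 1 := by rw [unitary_norm hUS, hu]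
    have hv' : ‖UR h v‖ = 1 := by rw [unitary_norm hUR, hv]
    have hBM := bornMeasure_spec hE (isState_rk1 v hv)
    have hBM' := bornMeasure_spec hE (isState_rk1 _ hv')
    haveI := hBM.1
    haveI := hBM'.1
    have hfc : Continuous (fun g : G => g * h⁻¹) := continuous_mul_right h⁻¹
    -- change of variables for the Born measure
    have hmap : bornMeasure E (rk1 (UR h v)) =
        (bornMeasure E (rk1 v)).map (fun g : G => g * h⁻¹) := by
      refine Measure.ext fun X hX => ?_
      rw [Measure.map_apply hfc.measurable hX]
      have hXh : MeasurableSet ((fun g : G => g * h⁻¹) ⁻¹' X) := hfc.measurable hX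
      have himg : (fun x : G => x * h) '' X = (fun g : G => g * h⁻¹) ⁻¹' X := by
        ext y
        constructor
        · rintro ⟨x, hx, rfl⟩
          simpa [Set.mem_preimage, mul_inv_cancel_right] using hx
        · intro hy
          exact ⟨y * h⁻¹, hy, inv_mul_cancel_right y h⟩
      have htr : (trace (rk1 (UR h v) ∘L E X)).re
          = (trace (rk1 v ∘L E ((fun g : G => g * h⁻¹) ⁻¹' X))).re := by
        rw [trace_rk1_comp, trace_rk1_comp, ← himg, hcov X hX h]
        congr 1
        simp only [ContinuousLinearMap.comp_apply]
        rw [ContinuousLinearMap.adjoint_inner_right]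
      rw [← ENNReal.ofReal_toReal (measure_ne_top _ X),
        ← ENNReal.ofReal_toReal (measure_ne_top _ ((fun g : G => g * h⁻¹) ⁻¹' X)),
        hBM'.2 X hX, hBM.2 _ hXh, htr]
    -- the two instances of the defining property of Y
    have h1 := hY (rk1 u) (rk1 v) (rk1 (tm.tmul u v)) (isState_rk1 u hu) (isState_rk1 v hv)
      (isTensorOp_rk1 tm u v)
    have h2 := hY (rk1 (US h u)) (rk1 (UR h v)) (rk1 (tm.tmul (US h u) (UR h v)))
      (isState_rk1 _ hu') (isState_rk1 _ hv') (isTensorOp_rk1 tm _ _)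
    simp only [trace_rk1_comp] at h1 h2
    have hcont : Continuous fun x : G =>
        (inner ℂ (US x (US h u)) (A (US x (US h u))) : ℂ) :=
      (hUS.2.2.2 (US h u)).inner (A.continuous.comp (hUS.2.2.2 (US h u)))
    have h2' : (inner ℂ (tm.tmul (US h u) (UR h v)) (Y (tm.tmul (US h u) (UR h v))) : ℂ)
        = ∫ x, (inner ℂ u (opAct US x A u) : ℂ) ∂(bornMeasure E (rk1 v)) := by
      rw [h2, hmap]
      calc ∫ x, (inner ℂ (US h u) (opAct US x A (US h u)) : ℂ)
              ∂((bornMeasure E (rk1 v)).map (fun g : G => g * h⁻¹))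
          = ∫ x, (inner ℂ (US x (US h u)) (A (US x (US h u))) : ℂ)
              ∂((bornMeasure E (rk1 v)).map (fun g : G => g * h⁻¹)) :=
            integral_congr_ae (Filter.Eventually.of_forall fun x => inner_opAct x (US h u) A)
        _ = ∫ x, (inner ℂ (US (x * h⁻¹) (US h u)) (A (US (x * h⁻¹) (US h u))) : ℂ)
              ∂(bornMeasure E (rk1 v)) :=
            integral_map hfc.measurable.aemeasurable hcont.aestronglyMeasurable
        _ = ∫ x, (inner ℂ u (opAct US x A u) : ℂ) ∂(bornMeasure E (rk1 v)) := by
            refine integral_congr_ae (Filter.Eventually.of_forall fun x => ?_)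
            beta_reduce
            have hv1 : US (x * h⁻¹) (US h u) = US x u := by
              rw [← ContinuousLinearMap.comp_apply, ← hUS.2.1, inv_mul_cancel_right]
            rw [hv1, inner_opAct]
    have hWuv : W (tm.tmul u v) = tm.tmul (US h u) (UR h v) := hW u v
    have hDval : (inner ℂ (tm.tmul u v) (adjoint W (Y (W (tm.tmul u v)))) : ℂ)
        = inner ℂ (tm.tmul u v) (Y (tm.tmul u v)) := by
      rw [ContinuousLinearMap.adjoint_inner_right, hWuv, h2', h1]
    simp [hDdef, ContinuousLinearMap.sub_apply, inner_sub_right, hDval]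
  -- Step B: diagonal matrix elements on all elementary tensors vanish
  have keyB : ∀ (u : HS) (v : HR), (inner ℂ (tm.tmul u v) (D (tm.tmul u v)) : ℂ) = 0 := by
    intro u v
    rcases eq_or_ne u 0 with rfl | hu0
    · have hz : tm.tmul 0 v = 0 := by simpa using tm.smul_left 0 0 v
      rw [hz]; simp
    rcases eq_or_ne v 0 with rfl | hv0
    · have hz : tm.tmul u 0 = 0 := by simpa using tm.smul_right 0 u 0
      rw [hz]; simp
    have hnu : ‖((‖u‖⁻¹ : ℝ) : ℂ) • u‖ = 1 := by
      rw [norm_smul, Complex.norm_real, Real.norm_eq_abs,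
        abs_of_nonneg (inv_nonneg.mpr (norm_nonneg u)),
        inv_mul_cancel₀ (norm_ne_zero_iff.mpr hu0)]
    have hnv : ‖((‖v‖⁻¹ : ℝ) : ℂ) • v‖ = 1 := by
      rw [norm_smul, Complex.norm_real, Real.norm_eq_abs,
        abs_of_nonneg (inv_nonneg.mpr (norm_nonneg v)),
        inv_mul_cancel₀ (norm_ne_zero_iff.mpr hv0)]
    have h0 := keyA _ _ hnu hnv
    have hc : tm.tmul (((‖u‖⁻¹ : ℝ) : ℂ) • u) (((‖v‖⁻¹ : ℝ) : ℂ) • v)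
        = (((‖u‖⁻¹ : ℝ) : ℂ) * ((‖v‖⁻¹ : ℝ) : ℂ)) • tm.tmul u v := by
      rw [tm.smul_left, tm.smul_right, smul_smul]
    rw [hc, _root_.map_smul, inner_smul_left, inner_smul_right] at h0
    have hcne : (((‖u‖⁻¹ : ℝ) : ℂ) * ((‖v‖⁻¹ : ℝ) : ℂ)) ≠ 0 :=
      mul_ne_zero (Complex.ofReal_ne_zero.mpr (inv_ne_zero (norm_ne_zero_iff.mpr hu0)))
        (Complex.ofReal_ne_zero.mpr (inv_ne_zero (norm_ne_zero_iff.mpr hv0)))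
    have hccne : (starRingEnd ℂ) (((‖u‖⁻¹ : ℝ) : ℂ) * ((‖v‖⁻¹ : ℝ) : ℂ)) ≠ 0 := by
      simpa using hcne
    rcases mul_eq_zero.mp h0 with hbad | h0'
    · exact absurd hbad hccne
    rcases mul_eq_zero.mp h0' with hbad | h0''
    · exact absurd hbad hcne
    exact h0''
  -- Step C: all matrix elements between elementary tensors vanish (polarization)
  have keyC : ∀ (u u' : HS) (v v' : HR),
      (inner ℂ (tm.tmul u v) (D (tm.tmul u' v')) : ℂ) = 0 := by
    have step1 : ∀ (v : HR) (u u' : HS),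
        (inner ℂ (tm.tmul u v) (D (tm.tmul u' v)) : ℂ) = 0 := by
      intro v u u'
      refine polarize (fun a b => (inner ℂ (tm.tmul a v) (D (tm.tmul b v)) : ℂ))
        (fun x y z => by beta_reduce; rw [tm.add_left, inner_add_left])
        (fun x y z => by beta_reduce; rw [tm.add_left, map_add, inner_add_right])
        (fun c x y => by beta_reduce; rw [tm.smul_left, inner_smul_left])
        (fun c x y => by beta_reduce; rw [tm.smul_left, _root_.map_smul, inner_smul_right])
        (fun x => keyB x v) u u'
    intro u u' v v'
    refine polarize (fun a b => (inner ℂ (tm.tmul u a) (D (tm.tmul u' b)) : ℂ))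
      (fun x y z => by beta_reduce; rw [tm.add_right, inner_add_left])
      (fun x y z => by beta_reduce; rw [tm.add_right, map_add, inner_add_right])
      (fun c x y => by beta_reduce; rw [tm.smul_right, inner_smul_left])
      (fun c x y => by beta_reduce; rw [tm.smul_right, _root_.map_smul, inner_smul_right])
      (fun x => step1 x u u') v v'
  -- Step D: density
  have hdense : Dense ((Submodule.span ℂ
      (Set.range fun p : HS × HR => tm.tmul p.1 p.2) : Submodule ℂ HT) : Set HT) :=
    tm.dense_span
  have hadj : ∀ s ∈ Set.range (fun p : HS × HR => tm.tmul p.1 p.2),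
      adjoint D s = 0 := by
    rintro _ ⟨⟨a, b⟩, rfl⟩
    set x := adjoint D (tm.tmul a b) with hxdef
    have hsub : Submodule.span ℂ (Set.range fun p : HS × HR => tm.tmul p.1 p.2)
        ≤ LinearMap.ker (innerSL ℂ x : HT →ₗ[ℂ] ℂ) := by
      refine Submodule.span_le.mpr ?_
      rintro _ ⟨⟨c, d⟩, rfl⟩
      have : (inner ℂ x (tm.tmul c d) : ℂ) = 0 := by
        rw [hxdef, ContinuousLinearMap.adjoint_inner_left]
        exact keyC a c b d
      simpa [LinearMap.mem_ker] using this
    have hall : ∀ t : HT, (inner ℂ x t : ℂ) = 0 := by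
      intro t
      have ht : t ∈ closure ((Submodule.span ℂ
          (Set.range fun p : HS × HR => tm.tmul p.1 p.2) : Submodule ℂ HT) : Set HT) := by
        rw [hdense.closure_eq]; trivial
      have := closure_minimal (fun z hz => hsub hz)
        (ContinuousLinearMap.isClosed_ker (innerSL ℂ x)) ht
      simpa [LinearMap.mem_ker] using this
    have := hall x
    rwa [inner_self_eq_zero] at this
  have hDadj : adjoint D = 0 := by
    have hsub : Submodule.span ℂ (Set.range fun p : HS × HR => tm.tmul p.1 p.2)
        ≤ LinearMap.ker (adjoint D : HT →ₗ[ℂ] HT) := by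
      refine Submodule.span_le.mpr ?_
      intro t ht
      simpa [LinearMap.mem_ker] using hadj t ht
    ext t
    have ht : t ∈ closure ((Submodule.span ℂ
        (Set.range fun p : HS × HR => tm.tmul p.1 p.2) : Submodule ℂ HT) : Set HT) := by
      rw [hdense.closure_eq]; trivial
    have := closure_minimal (fun z hz => hsub hz)
      (ContinuousLinearMap.isClosed_ker (adjoint D)) ht
    simpa [LinearMap.mem_ker] using this
  have hD0 : D = 0 := by
    rw [← ContinuousLinearMap.adjoint_adjoint D, hDadj, map_zero]
  have hfin : adjoint W ∘L Y ∘L W - Y = 0 := by rw [← hDdef]; exact hD0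
  exact sub_eq_zero.mp hfin
end
end
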